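/- arXiv:0904.0932 — 7 statements merged into one kernel-verified Lean document; each statement's English description precedes it below -/
import Mathlib

section
/- Let (Y_k) be a sequence of real random variables adapted to a filtration (G_k) with sum over n of E[Y_n^2]/n^2 finite, and suppose E[Y_{n+1} | G_n] converges almost surely to a random variable Y. Then (1/n) * sum_{k=1}^n Y_k converges almost surely to Y. -/
/-!
Write `c n = E[Y (n+1) | G n]`. The normalised innovations `(Y (n+1) - c n) / (n+1)` are martingale
differences, orthogonal in `L²` with second moments at most `E[Y (n+1)²] / (n+1)²`, so their partial
sums form an `L²`-bounded martingale, which converges almost surely. Kronecker's lemma turns this into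
`(1/n) ∑_{k<n} (Y (k+1) - c k) → 0`, and Cesàro averaging of `c n → Y` gives the rest.
-/

open MeasureTheory Filter Finset
open scoped Topology

lemma sum_range_eq_mul_sum_div_sub (u : ℕ → ℝ) (n : ℕ) :
    ∑ k ∈ range n, u k
      = n * (∑ j ∈ range n, u j / (j + 1))
        - ∑ k ∈ range n, ∑ j ∈ range k, u j / (j + 1) := by
  induction n with
  | zero => simp
  | succ n ih =>
    rw [sum_range_succ, ih, sum_range_succ (f := fun k => ∑ j ∈ range k, u j / ((j : ℝ) + 1)),
      sum_range_succ (f := fun j => u j / ((j : ℝ) + 1))]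
    push_cast
    field_simp
    ring

theorem Filter.Tendsto.kronecker {u : ℕ → ℝ} {s : ℝ}
    (h : Tendsto (fun n => ∑ j ∈ range n, u j / (j + 1)) atTop (𝓝 s)) :
    Tendsto (fun n : ℕ => (n : ℝ)⁻¹ * ∑ k ∈ range n, u k) atTop (𝓝 0) := by
  have hsub := h.sub h.cesaro
  rw [sub_self] at hsub
  refine hsub.congr' ?_
  filter_upwards [eventually_ne_atTop 0] with n hn
  have hn' : (n : ℝ) ≠ 0 := Nat.cast_ne_zero.2 hn
  rw [sum_range_eq_mul_sum_div_sub u n]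
  field_simp

namespace MeasureTheory

variable {Ω : Type*} {m m0 : MeasurableSpace Ω} {μ : Measure Ω} [IsFiniteMeasure μ]

lemma condExp_sub_condExp_ae_eq_zero (hm : m ≤ m0) {f : Ω → ℝ} (hf : Integrable f μ) :
    μ[f - μ[f|m]|m] =ᵐ[μ] 0 := by
  have h := condExp_sub hf (integrable_condExp (m := m) (f := f)) m
  rwa [condExp_of_stronglyMeasurable hm stronglyMeasurable_condExp integrable_condExp,
    sub_self] at h

lemma integral_sq_add_of_condExp_ae_eq_zero (hm : m ≤ m0) {f g : Ω → ℝ}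
    (hf : StronglyMeasurable[m] f) (hf2 : MemLp f 2 μ) (hg2 : MemLp g 2 μ)
    (hg : μ[g|m] =ᵐ[μ] 0) :
    ∫ ω, (f ω + g ω) ^ 2 ∂μ = ∫ ω, f ω ^ 2 ∂μ + ∫ ω, g ω ^ 2 ∂μ := by
  have hfg : Integrable (fun ω => f ω * g ω) μ := hf2.integrable_mul hg2
  have horth : ∫ ω, f ω * g ω ∂μ = 0 := by
    have hpull : μ[f * g|m] =ᵐ[μ] 0 := by
      filter_upwards [condExp_mul_of_stronglyMeasurable_left hf hfg (hg2.integrable one_le_two),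
        hg] with ω hω hω'
      simp [hω, hω']
    calc ∫ ω, f ω * g ω ∂μ = ∫ ω, (μ[f * g|m]) ω ∂μ := (integral_condExp hm).symm
      _ = 0 := by simp [integral_congr_ae hpull]
  calc ∫ ω, (f ω + g ω) ^ 2 ∂μ = ∫ ω, (f ω ^ 2 + 2 * (f ω * g ω) + g ω ^ 2) ∂μ := by
        congr 1; ext ω; ring
    _ = ∫ ω, f ω ^ 2 ∂μ + ∫ ω, g ω ^ 2 ∂μ := by
      have hfg2 : Integrable (fun ω => 2 * (f ω * g ω)) μ := hfg.const_mul 2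
      have hsum : Integrable (fun ω => f ω ^ 2 + 2 * (f ω * g ω)) μ := hf2.integrable_sq.add hfg2
      rw [integral_add hsum hg2.integrable_sq,
        integral_add hf2.integrable_sq hfg2, integral_const_mul, horth]
      ring

lemma integral_sq_sub_condExp_le (hm : m ≤ m0) {f : Ω → ℝ} (hf : MemLp f 2 μ) :
    ∫ ω, (f ω - (μ[f|m]) ω) ^ 2 ∂μ ≤ ∫ ω, f ω ^ 2 ∂μ := by
  have hc : MemLp (μ[f|m]) 2 μ := hf.condExp one_le_two
  have h := integral_sq_add_of_condExp_ae_eq_zero hm stronglyMeasurable_condExp hc (hf.sub hc)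
    (condExp_sub_condExp_ae_eq_zero hm (hf.integrable one_le_two))
  simp only [Pi.sub_apply, add_sub_cancel] at h
  have hc_sq : 0 ≤ ∫ ω, (μ[f|m]) ω ^ 2 ∂μ := integral_nonneg fun ω => sq_nonneg _
  linarith

lemma eLpNorm_one_le_ofReal_measureReal_add_integral_sq {f : Ω → ℝ} (hf : MemLp f 2 μ) :
    eLpNorm f 1 μ ≤ ENNReal.ofReal (μ.real Set.univ + ∫ ω, f ω ^ 2 ∂μ) := by
  rw [eLpNorm_one_eq_lintegral_enorm,
    ← ofReal_integral_norm_eq_lintegral_enorm (hf.integrable one_le_two)]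
  refine ENNReal.ofReal_le_ofReal ?_
  calc ∫ ω, ‖f ω‖ ∂μ ≤ ∫ ω, (1 + f ω ^ 2) ∂μ := by
        refine integral_mono (hf.integrable one_le_two).norm
          ((integrable_const 1).add hf.integrable_sq) fun ω => ?_
        rw [Real.norm_eq_abs]
        nlinarith [sq_abs (f ω), sq_nonneg (|f ω| - 1)]
    _ = μ.real Set.univ + ∫ ω, f ω ^ 2 ∂μ := by
        rw [integral_add (integrable_const 1) hf.integrable_sq, integral_const, smul_eq_mul, mul_one]

theorem ae_exists_tendsto_sum_of_summable_integral_sq {ℱ : Filtration ℕ m0}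
    {d : ℕ → Ω → ℝ} (hd : ∀ k, StronglyMeasurable[ℱ (k + 1)] (d k))
    (hd2 : ∀ k, MemLp (d k) 2 μ) (hd0 : ∀ k, μ[d k|ℱ k] =ᵐ[μ] 0)
    (hsum : Summable fun k => ∫ ω, d k ω ^ 2 ∂μ) :
    ∀ᵐ ω ∂μ, ∃ l, Tendsto (fun n => ∑ k ∈ range n, d k ω) atTop (𝓝 l) := by
  set M : ℕ → Ω → ℝ := fun n => ∑ k ∈ range n, d k with hM
  have hM_succ (n : ℕ) : M (n + 1) = M n + d n := sum_range_succ _ _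
  have hM_adapted : StronglyAdapted ℱ M := fun n =>
    stronglyMeasurable_sum _ fun k hk => (hd k).mono (ℱ.mono (mem_range.1 hk))
  have hM2 (n : ℕ) : MemLp (M n) 2 μ := memLp_finsetSum' _ fun k _ => hd2 k
  have hM_mart : Martingale M ℱ μ :=
    martingale_of_condExp_sub_eq_zero_nat hM_adapted (fun n => (hM2 n).integrable one_le_two)
      fun n => by simpa [hM_succ] using hd0 n
  have hM_sq (n : ℕ) : ∫ ω, M n ω ^ 2 ∂μ = ∑ k ∈ range n, ∫ ω, d k ω ^ 2 ∂μ := by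
    induction n with
    | zero => simp [hM]
    | succ n ih =>
      rw [sum_range_succ, ← ih, ← integral_sq_add_of_condExp_ae_eq_zero (ℱ.le n)
        (hM_adapted n) (hM2 n) (hd2 n) (hd0 n), hM_succ]
      rfl
  have hM_bdd (n : ℕ) :
      eLpNorm (M n) 1 μ ≤ ENNReal.ofReal (μ.real Set.univ + ∑' k, ∫ ω, d k ω ^ 2 ∂μ) := by
    refine (eLpNorm_one_le_ofReal_measureReal_add_integral_sq (hM2 n)).trans ?_
    rw [hM_sq]
    gcongr
    exact hsum.sum_le_tsum _ fun k _ => integral_nonneg fun ω => sq_nonneg _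
  simpa only [hM, Finset.sum_apply] using hM_mart.submartingale.exists_ae_tendsto_of_bdd hM_bdd

theorem ae_tendsto_cesaro_sub_condExp {ℱ : Filtration ℕ m0} {X : ℕ → Ω → ℝ}
    (hX : ∀ n, StronglyMeasurable[ℱ (n + 1)] (X n)) (hX2 : ∀ n, MemLp (X n) 2 μ)
    (hsum : Summable fun n : ℕ => (∫ ω, X n ω ^ 2 ∂μ) / ((n + 1 : ℝ)) ^ 2) :
    ∀ᵐ ω ∂μ, Tendsto (fun n : ℕ => (n : ℝ)⁻¹ * ∑ k ∈ range n, (X k ω - (μ[X k|ℱ k]) ω))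
      atTop (𝓝 0) := by
  set d : ℕ → Ω → ℝ := fun k ω => (X k ω - (μ[X k|ℱ k]) ω) / (k + 1) with hd
  have hd_smul (k : ℕ) : d k = ((k : ℝ) + 1)⁻¹ • (X k - μ[X k|ℱ k]) := by
    ext ω
    simp [hd, div_eq_inv_mul]
  have hd_meas (k : ℕ) : StronglyMeasurable[ℱ (k + 1)] (d k) := by
    rw [hd_smul]
    exact ((hX k).sub (stronglyMeasurable_condExp.mono (ℱ.mono k.le_succ))).const_smul _
  have hd2 (k : ℕ) : MemLp (d k) 2 μ := by
    rw [hd_smul]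
    exact ((hX2 k).sub ((hX2 k).condExp one_le_two)).const_smul _
  have hd0 (k : ℕ) : μ[d k|ℱ k] =ᵐ[μ] 0 := by
    rw [hd_smul]
    filter_upwards [condExp_smul ((k : ℝ) + 1)⁻¹ (X k - μ[X k|ℱ k]) (ℱ k),
      condExp_sub_condExp_ae_eq_zero (ℱ.le k) ((hX2 k).integrable one_le_two)] with ω h h'
    simp [h, h']
  have hd_sq (k : ℕ) : ∫ ω, d k ω ^ 2 ∂μ ≤ (∫ ω, X k ω ^ 2 ∂μ) / ((k + 1 : ℝ)) ^ 2 := by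
    simp only [hd, div_pow, integral_div]
    exact div_le_div_of_nonneg_right (integral_sq_sub_condExp_le (ℱ.le k) (hX2 k)) (by positivity)
  have hd_sum : Summable fun k => ∫ ω, d k ω ^ 2 ∂μ :=
    hsum.of_nonneg_of_le (fun k => integral_nonneg fun ω => sq_nonneg _) hd_sq
  filter_upwards [ae_exists_tendsto_sum_of_summable_integral_sq hd_meas hd2 hd0 hd_sum]
    with ω ⟨l, hl⟩
  exact Tendsto.kronecker hl

end MeasureTheory

theorem stmt0
    {Ω : Type*} {m0 : MeasurableSpace Ω} {μ : Measure Ω} [IsProbabilityMeasure μ]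
    (𝒢 : ℕ → MeasurableSpace Ω) (h𝒢mono : Monotone 𝒢) (h𝒢le : ∀ n, 𝒢 n ≤ m0)
    (Y : ℕ → Ω → ℝ) (hadp : ∀ n, Measurable[𝒢 n] (Y n))
    (hL2 : ∀ n, MemLp (Y n) 2 μ)
    (hsum : Summable (fun n : ℕ => (∫ ω, (Y (n + 1) ω) ^ 2 ∂μ) / ((n + 1 : ℝ)) ^ 2))
    (Ylim : Ω → ℝ)
    (hce : ∀ᵐ ω ∂μ, Tendsto (fun n => (μ[Y (n + 1)|𝒢 n]) ω) atTop (𝓝 (Ylim ω))) :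
    ∀ᵐ ω ∂μ, Tendsto (fun n : ℕ => (1 / (n : ℝ)) * ∑ k ∈ Finset.Icc 1 n, Y k ω)
      atTop (𝓝 (Ylim ω)) := by
  let ℱ : Filtration ℕ m0 := ⟨𝒢, h𝒢mono, h𝒢le⟩
  filter_upwards [hce, ae_tendsto_cesaro_sub_condExp (ℱ := ℱ) (X := fun n => Y (n + 1))
    (fun n => (hadp (n + 1)).stronglyMeasurable) (fun n => hL2 (n + 1)) hsum]
    with ω hc hinnov
  have hlim := hinnov.add hc.cesaro
  rw [zero_add] at hlim
  refine hlim.congr fun n => ?_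
  rw [one_div, ← mul_add, ← sum_add_distrib, ← Ico_add_one_right_eq_Icc, sum_Ico_eq_sum_range,
    add_tsub_cancel_right]
  exact congrArg _ (sum_congr rfl fun k _ => by rw [add_comm 1 k]; exact sub_add_cancel _ _)
end

section
/- Let (Y_k) be a sequence of real random variables adapted to a filtration (G_k) with sum over n of E[Y_n^2]/n^2 finite, and suppose E[Y_{n+1} | G_n] converges almost surely to a random variable Y. Then n * sum_{k≥n} Y_k/k^2 converges almost surely to Y. -/
/-!
Write `b n = E[Y (n+1) | G n]` and `Y (n+1) = b n + (Y (n+1) - b n)`. The innovations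
`(Y (n+1) - b n) / (n+1)` are orthogonal martingale differences whose second moments are
dominated by `E[Y (n+1)^2] / (n+1)^2`, so their partial sums form an `L²`-bounded martingale,
which converges almost surely. Pathwise, the averaging `x ↦ n ∑_{k ≥ n} x_k / k²` sends a
convergent sequence to its limit (Toeplitz), and it sends `x` to `0` whenever `∑ x_k / k`
converges (Kronecker, by Abel summation). Applied to `b` and to the innovations respectively,
this gives the limit of `b`.
-/

open MeasureTheory Filter Real Finset
open scoped ENNReal NNReal Topology

theorem summable_one_div_add_one_sq : Summable fun j : ℕ => 1 / ((j : ℝ) + 1) ^ 2 := by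
  simpa [abs_of_nonneg (by positivity : ∀ j : ℕ, (0 : ℝ) ≤ j + 1)] using
    (Real.summable_one_div_nat_add_rpow 1 2).2 one_lt_two

theorem Summable.div_add_sq_tail {x : ℕ → ℝ}
    (hx : Summable fun j => x j / ((j : ℝ) + 1) ^ 2) (m : ℕ) :
    Summable fun k => x (m + k) / ((m : ℝ) + k + 1) ^ 2 := by
  refine ((summable_nat_add_iff m).2 hx).congr fun k => ?_
  rw [add_comm k m]
  push_cast
  ring

theorem summable_div_add_one_sq_of_tendsto {x : ℕ → ℝ} {L : ℝ}
    (hx : Tendsto x atTop (𝓝 L)) :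
    Summable fun j => x j / ((j : ℝ) + 1) ^ 2 := by
  obtain ⟨C, hC⟩ := hx.norm.bddAbove_range
  refine (summable_one_div_add_one_sq.mul_left C).of_norm_bounded fun j => ?_
  rw [norm_div, norm_of_nonneg (by positivity : (0 : ℝ) ≤ ((j : ℝ) + 1) ^ 2), mul_one_div]
  gcongr
  exact hC ⟨j, rfl⟩

theorem summable_div_add_one_sq_of_summable_sq {x : ℕ → ℝ}
    (hx : Summable fun j => x j ^ 2 / ((j : ℝ) + 1) ^ 2) :
    Summable fun j => x j / ((j : ℝ) + 1) ^ 2 := by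
  refine (summable_one_div_add_one_sq.add hx).of_norm_bounded fun j => ?_
  rw [norm_div, norm_of_nonneg (by positivity : (0 : ℝ) ≤ ((j : ℝ) + 1) ^ 2), ← add_div]
  gcongr
  nlinarith [abs_mul_abs_self (x j), sq_nonneg (|x j| - 1), Real.norm_eq_abs (x j)]

theorem hasSum_one_div_add_mul_add_one {c : ℝ} (hc : 0 < c) :
    HasSum (fun k : ℕ => 1 / ((c + k) * (c + k + 1))) (1 / c) := by
  have hpartial (n : ℕ) :
      ∑ k ∈ range n, 1 / ((c + k) * (c + k + 1)) = 1 / c - 1 / (c + n) := by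
    calc ∑ k ∈ range n, 1 / ((c + k) * (c + k + 1))
        = ∑ k ∈ range n, (1 / (c + k) - 1 / (c + (k + 1 : ℕ))) := by
          refine sum_congr rfl fun k _ => ?_
          have : 0 < c + k := by positivity
          push_cast
          field_simp
          ring
      _ = 1 / c - 1 / (c + n) := by
          rw [sum_range_sub' (fun k : ℕ => 1 / (c + k)), Nat.cast_zero, add_zero]
  rw [hasSum_iff_tendsto_nat_of_nonneg (fun k => by positivity), funext hpartial]
  simpa using tendsto_const_nhds.sub
    (tendsto_inv_atTop_zero.comp (tendsto_atTop_add_const_left _ c tendsto_natCast_atTop_atTop))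

noncomputable def tailMean (x : ℕ → ℝ) (m : ℕ) : ℝ :=
  (m + 1) * ∑' k, x (m + k) / ((m : ℝ) + k + 1) ^ 2

theorem natCast_mul_tsum_eq_tailMean (y : ℕ → ℝ) (m : ℕ) :
    ((m + 1 : ℕ) : ℝ) * ∑' k, y (m + 1 + k) / ((m + 1 + k : ℕ) : ℝ) ^ 2
      = tailMean (fun j => y (j + 1)) m := by
  simp only [tailMean, Nat.add_right_comm m 1]
  push_cast
  ring_nf

theorem tailMean_add {x y : ℕ → ℝ} (hx : Summable fun j => x j / ((j : ℝ) + 1) ^ 2)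
    (hy : Summable fun j => y j / ((j : ℝ) + 1) ^ 2) (m : ℕ) :
    tailMean (x + y) m = tailMean x m + tailMean y m := by
  simp only [tailMean, Pi.add_apply, add_div,
    (hx.div_add_sq_tail m).tsum_add (hy.div_add_sq_tail m), mul_add]

theorem tailMean_const_mul (c : ℝ) (x : ℕ → ℝ) (m : ℕ) :
    tailMean (fun j => c * x j) m = c * tailMean x m := by
  simp only [tailMean, mul_div_assoc, tsum_mul_left]
  ring

theorem tendsto_tailMean_one : Tendsto (tailMean fun _ => 1) atTop (𝓝 1) := by
  have hpos (m k : ℕ) : 0 < (m : ℝ) + k + 1 := by positivity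
  have hsum (m : ℕ) := (summable_one_div_add_one_sq.div_add_sq_tail m)
  have lower (m : ℕ) : 1 ≤ tailMean (fun _ => 1) m := by
    have h := hasSum_one_div_add_mul_add_one (c := (m : ℝ) + 1) (by positivity)
    have : 1 / ((m : ℝ) + 1) ≤ ∑' k : ℕ, 1 / ((m : ℝ) + k + 1) ^ 2 := by
      rw [← h.tsum_eq]
      refine h.summable.tsum_le_tsum (fun k => ?_) (hsum m)
      gcongr; linarith [hpos m k]
    rw [tailMean, ← div_le_iff₀' (by positivity)]
    simpa using this
  have upper (m : ℕ) (hm : 1 ≤ m) : tailMean (fun _ => 1) m ≤ 1 + 1 / (m : ℝ) := by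
    have hm' : (1 : ℝ) ≤ m := by exact_mod_cast hm
    have h := hasSum_one_div_add_mul_add_one (c := (m : ℝ)) (by positivity)
    have : ∑' k : ℕ, 1 / ((m : ℝ) + k + 1) ^ 2 ≤ 1 / (m : ℝ) := by
      rw [← h.tsum_eq]
      refine (hsum m).tsum_le_tsum (fun k => ?_) h.summable
      gcongr; linarith [hpos m k]
    calc tailMean (fun _ => 1) m ≤ ((m : ℝ) + 1) * (1 / (m : ℝ)) :=
          mul_le_mul_of_nonneg_left this (by positivity)
      _ = 1 + 1 / (m : ℝ) := by field_simp
  refine tendsto_of_tendsto_of_tendsto_of_le_of_le' tendsto_const_nhds ?_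
    (Eventually.of_forall lower) ((eventually_ge_atTop 1).mono upper)
  simpa using (tendsto_const_nhds (x := (1 : ℝ))).add tendsto_one_div_atTop_nhds_zero_nat

theorem abs_tailMean_le {x : ℕ → ℝ} {ε : ℝ} {m : ℕ} (hx : ∀ k, |x (m + k)| ≤ ε) :
    |tailMean x m| ≤ ε * tailMean (fun _ => 1) m := by
  have hS := ((summable_one_div_add_one_sq.div_add_sq_tail m).hasSum).mul_left ε
  have htsum : |∑' k, x (m + k) / ((m : ℝ) + k + 1) ^ 2|
      ≤ ε * ∑' k : ℕ, 1 / ((m : ℝ) + k + 1) ^ 2 := by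
    rw [← Real.norm_eq_abs]
    refine tsum_of_norm_bounded hS fun k => ?_
    rw [norm_div, norm_of_nonneg (by positivity : (0 : ℝ) ≤ ((m : ℝ) + k + 1) ^ 2),
      mul_one_div]
    gcongr
    exact hx k
  rw [tailMean, tailMean, abs_mul, abs_of_nonneg (by positivity : (0 : ℝ) ≤ m + 1),
    mul_left_comm]
  gcongr

theorem tendsto_tailMean_zero {x : ℕ → ℝ} (hx : Tendsto x atTop (𝓝 0)) :
    Tendsto (tailMean x) atTop (𝓝 0) := by
  rw [NormedAddGroup.tendsto_nhds_zero]
  intro ε hε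
  have hone : ∀ᶠ m in atTop, tailMean (fun _ => 1) m < 2 :=
    tendsto_tailMean_one.eventually (gt_mem_nhds one_lt_two)
  obtain ⟨M, hM⟩ := eventually_atTop.1
    ((NormedAddGroup.tendsto_nhds_zero.1 hx) (ε / 2) (by positivity))
  filter_upwards [hone, eventually_ge_atTop M] with m hm hMm
  calc ‖tailMean x m‖ ≤ ε / 2 * tailMean (fun _ => 1) m :=
        abs_tailMean_le fun k => (hM (m + k) (by omega)).le
    _ < ε / 2 * 2 := by gcongr
    _ = ε := by ring

theorem tendsto_tailMean_of_tendsto {x : ℕ → ℝ} {L : ℝ} (hx : Tendsto x atTop (𝓝 L)) :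
    Tendsto (tailMean x) atTop (𝓝 L) := by
  have hx₀ : Tendsto (fun j => x j - L) atTop (𝓝 0) := by simpa using hx.sub_const L
  have hdecomp :
      tailMean x = fun m => tailMean (fun j => x j - L) m + L * tailMean (fun _ => 1) m := by
    funext m
    rw [← tailMean_const_mul, ← tailMean_add (summable_div_add_one_sq_of_tendsto hx₀)
      (summable_div_add_one_sq_of_tendsto tendsto_const_nhds)]
    congr
    funext j
    simp
  rw [hdecomp]
  simpa using (tendsto_tailMean_zero hx₀).add (tendsto_tailMean_one.const_mul L)

theorem abs_sum_range_mul_le_of_antitone {u a : ℕ → ℝ} (ha : Antitone a) (ha₀ : ∀ k, 0 ≤ a k)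
    {B : ℝ} (hB : ∀ N, |∑ k ∈ range N, u k| ≤ B) (N : ℕ) :
    |∑ k ∈ range N, u k * a k| ≤ B * a 0 := by
  have hparts := sum_range_by_parts a u N
  simp only [smul_eq_mul] at hparts
  simp_rw [mul_comm (u _), hparts]
  have hdiff (i : ℕ) : 0 ≤ a i - a (i + 1) := sub_nonneg.2 (ha (Nat.le_succ i))
  calc _ ≤ |a (N - 1) * ∑ k ∈ range N, u k|
        + |∑ i ∈ range (N - 1), (a (i + 1) - a i) * ∑ k ∈ range (i + 1), u k| := abs_sub _ _
    _ ≤ a (N - 1) * B + ∑ i ∈ range (N - 1), (a i - a (i + 1)) * B := by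
        gcongr
        · rw [abs_mul, abs_of_nonneg (ha₀ _)]
          exact mul_le_mul_of_nonneg_left (hB N) (ha₀ _)
        · refine (abs_sum_le_sum_abs _ _).trans (sum_le_sum fun i _ => ?_)
          rw [abs_mul, ← neg_sub, abs_neg, abs_of_nonneg (hdiff i)]
          exact mul_le_mul_of_nonneg_left (hB _) (hdiff i)
    _ = B * a 0 := by
        rw [← sum_mul, sum_range_sub']
        ring

theorem tendsto_tailMean_zero_of_tendsto_sum {x : ℕ → ℝ}
    (hx : Summable fun j => x j / ((j : ℝ) + 1) ^ 2) {l : ℝ}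
    (hl : Tendsto (fun n => ∑ j ∈ range n, x j / ((j : ℝ) + 1)) atTop (𝓝 l)) :
    Tendsto (tailMean x) atTop (𝓝 0) := by
  rw [NormedAddGroup.tendsto_nhds_zero]
  intro ε hε
  obtain ⟨M, hM⟩ := Metric.cauchySeq_iff'.1 hl.cauchySeq (ε / 4) (by positivity)
  filter_upwards [eventually_ge_atTop M] with m hm
  have hblock (N : ℕ) : |∑ k ∈ range N, x (m + k) / ((m : ℝ) + k + 1)| ≤ ε / 2 := by
    have h₁ := hM (m + N) (by omega)
    have h₂ := hM m hm
    rw [Real.dist_eq, abs_lt] at h₁ h₂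
    rw [sum_range_add] at h₁
    push_cast at h₁
    rw [abs_le]
    constructor <;> linarith
  have hweight : Antitone fun k : ℕ => 1 / ((m : ℝ) + k + 1) := fun i j hij => by
    dsimp only
    gcongr
  have hpartial (N : ℕ) :
      |∑ k ∈ range N, x (m + k) / ((m : ℝ) + k + 1) ^ 2| ≤ ε / 2 * (1 / ((m : ℝ) + 1)) := by
    calc _ = |∑ k ∈ range N, x (m + k) / ((m : ℝ) + k + 1) * (1 / ((m : ℝ) + k + 1))| := by
          simp only [div_mul_div_comm, mul_one, sq]
      _ ≤ ε / 2 * (1 / ((m : ℝ) + (0 : ℕ) + 1)) :=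
          abs_sum_range_mul_le_of_antitone hweight (fun k => by positivity) hblock N
      _ = ε / 2 * (1 / ((m : ℝ) + 1)) := by simp
  have htsum := le_of_tendsto' ((hx.div_add_sq_tail m).hasSum.tendsto_sum_nat.abs) hpartial
  rw [tailMean, norm_mul, Real.norm_eq_abs, Real.norm_eq_abs,
    abs_of_nonneg (by positivity : (0 : ℝ) ≤ m + 1)]
  calc _ ≤ ((m : ℝ) + 1) * (ε / 2 * (1 / ((m : ℝ) + 1))) := by gcongr
    _ = ε / 2 := by field_simp
    _ < ε := by linarith

section Conditioning

variable {Ω : Type*} {m m0 : MeasurableSpace Ω} {μ : Measure Ω} [IsFiniteMeasure μ]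

theorem integral_mul_condExp_of_stronglyMeasurable (hm : m ≤ m0) {g X : Ω → ℝ}
    (hg : StronglyMeasurable[m] g) (hg₂ : MemLp g 2 μ) (hX : MemLp X 2 μ) :
    ∫ ω, g ω * μ[X|m] ω ∂μ = ∫ ω, g ω * X ω ∂μ :=
  calc ∫ ω, g ω * μ[X|m] ω ∂μ = ∫ ω, μ[g * X|m] ω ∂μ := integral_congr_ae
        (condExp_mul_of_stronglyMeasurable_left hg (hg₂.integrable_mul hX)
          (hX.integrable one_le_two)).symm
    _ = ∫ ω, g ω * X ω ∂μ := integral_condExp hm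

theorem integral_sub_condExp_sq_le (hm : m ≤ m0) {X : Ω → ℝ} (hX : MemLp X 2 μ) :
    ∫ ω, (X ω - μ[X|m] ω) ^ 2 ∂μ ≤ ∫ ω, X ω ^ 2 ∂μ := by
  have hb : MemLp (μ[X|m]) 2 μ := hX.condExp one_le_two
  have hXb := integral_mul_condExp_of_stronglyMeasurable hm stronglyMeasurable_condExp hb hX
  have hbX : Integrable (fun ω => μ[X|m] ω * X ω) μ := hb.integrable_mul hX
  have hbb : Integrable (fun ω => μ[X|m] ω * μ[X|m] ω) μ := hb.integrable_mul hb
  have hexpand : ∫ ω, (X ω - μ[X|m] ω) ^ 2 ∂μ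
      = ∫ ω, X ω ^ 2 ∂μ - 2 * ∫ ω, μ[X|m] ω * X ω ∂μ + ∫ ω, μ[X|m] ω * μ[X|m] ω ∂μ := by
    have hsub : Integrable (fun ω => X ω ^ 2 - 2 * (μ[X|m] ω * X ω)) μ :=
      hX.integrable_sq.sub (hbX.const_mul 2)
    rw [← integral_const_mul, ← integral_sub hX.integrable_sq (hbX.const_mul 2),
      ← integral_add hsub hbb]
    congr 1
    funext ω
    ring
  rw [hexpand, ← hXb]
  have hbb₀ : 0 ≤ ∫ ω, μ[X|m] ω * μ[X|m] ω ∂μ :=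
    integral_nonneg fun ω => mul_self_nonneg (μ[X|m] ω)
  linarith

theorem condExp_sub_condExp (hm : m ≤ m0) {X : Ω → ℝ} (hX : Integrable X μ) :
    μ[X - μ[X|m]|m] =ᵐ[μ] 0 := by
  filter_upwards [condExp_sub hX integrable_condExp m] with ω hω
  rw [hω, condExp_of_stronglyMeasurable hm stronglyMeasurable_condExp integrable_condExp]
  simp

theorem eLpNorm_one_le_of_memLp_two {f : Ω → ℝ} (hf : MemLp f 2 μ) :
    eLpNorm f 1 μ ≤ ENNReal.ofReal (μ.real Set.univ + ∫ ω, f ω ^ 2 ∂μ) := by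
  have hint : Integrable f μ := hf.integrable one_le_two
  rw [eLpNorm_one_eq_lintegral_enorm, ← ofReal_integral_norm_eq_lintegral_enorm hint]
  refine ENNReal.ofReal_le_ofReal ?_
  rw [show μ.real Set.univ = ∫ _, (1 : ℝ) ∂μ by simp,
    ← integral_add (integrable_const 1) hf.integrable_sq]
  refine integral_mono hint.norm ((integrable_const 1).add hf.integrable_sq) fun ω => ?_
  nlinarith [abs_mul_abs_self (f ω), sq_nonneg (|f ω| - 1), Real.norm_eq_abs (f ω)]

end Conditioning

theorem ae_summable_of_summable_integral {Ω : Type*} {m0 : MeasurableSpace Ω} {μ : Measure Ω}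
    {f : ℕ → Ω → ℝ} (hf₀ : ∀ n ω, 0 ≤ f n ω) (hf : ∀ n, Integrable (f n) μ)
    (hsum : Summable fun n => ∫ ω, f n ω ∂μ) :
    ∀ᵐ ω ∂μ, Summable fun n => f n ω := by
  have hnorm (n : ℕ) : eLpNorm (f n) 1 μ = ENNReal.ofReal (∫ ω, f n ω ∂μ) := by
    rw [eLpNorm_one_eq_lintegral_enorm, ← ofReal_integral_norm_eq_lintegral_enorm (hf n)]
    simp_rw [Real.norm_of_nonneg (hf₀ n _)]
  have hfin : ∑' n, eLpNorm (f n) 1 μ ≠ ∞ := by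
    simp_rw [hnorm, ← ENNReal.ofReal_tsum_of_nonneg (fun n => integral_nonneg (hf₀ n)) hsum]
    exact ENNReal.ofReal_ne_top
  filter_upwards [summable_norm_of_tsum_eLpNorm_ne_top le_rfl
    (fun n => (hf n).aestronglyMeasurable) hfin] with ω hω
  exact hω.of_norm

section MartingaleDifferences

variable {Ω : Type*} {m0 : MeasurableSpace Ω} {μ : Measure Ω} [IsFiniteMeasure μ]
  {ℱ : Filtration ℕ m0} {d : ℕ → Ω → ℝ}

theorem stronglyMeasurable_sum_range (hd : ∀ n, StronglyMeasurable[ℱ (n + 1)] (d n)) (n : ℕ) :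
    StronglyMeasurable[ℱ n] fun ω => ∑ k ∈ range n, d k ω :=
  Finset.stronglyMeasurable_fun_sum _ fun k hk => (hd k).mono (ℱ.mono (mem_range.1 hk))

theorem martingale_sum_range (hd : ∀ n, StronglyMeasurable[ℱ (n + 1)] (d n))
    (hd₁ : ∀ n, Integrable (d n) μ) (hd₀ : ∀ n, μ[d n|ℱ n] =ᵐ[μ] 0) :
    Martingale (fun n ω => ∑ k ∈ range n, d k ω) ℱ μ := by
  refine martingale_of_condExp_sub_eq_zero_nat (stronglyMeasurable_sum_range hd)
    (fun n => integrable_finsetSum _ fun k _ => hd₁ k) fun n => ?_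
  have hincr :
      (fun ω => ∑ k ∈ range (n + 1), d k ω) - (fun ω => ∑ k ∈ range n, d k ω) = d n := by
    funext ω
    simp [sum_range_succ]
  rw [hincr]
  exact hd₀ n

theorem integral_sum_range_sq (hd : ∀ n, StronglyMeasurable[ℱ (n + 1)] (d n))
    (hd₂ : ∀ n, MemLp (d n) 2 μ) (hd₀ : ∀ n, μ[d n|ℱ n] =ᵐ[μ] 0) (n : ℕ) :
    ∫ ω, (∑ k ∈ range n, d k ω) ^ 2 ∂μ = ∑ k ∈ range n, ∫ ω, d k ω ^ 2 ∂μ := by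
  induction n with
  | zero => simp
  | succ n ih =>
    have hf₂ : MemLp (fun ω => ∑ k ∈ range n, d k ω) 2 μ :=
      memLp_finsetSum _ fun k _ => hd₂ k
    have horth : ∫ ω, (∑ k ∈ range n, d k ω) * d n ω ∂μ = 0 := by
      rw [← integral_mul_condExp_of_stronglyMeasurable (ℱ.le n)
        (stronglyMeasurable_sum_range hd n) hf₂ (hd₂ n)]
      refine (integral_congr_ae ((hd₀ n).mono fun ω hω => ?_)).trans (integral_zero Ω ℝ)
      simp [hω]
    have hff : Integrable (fun ω => (∑ k ∈ range n, d k ω) ^ 2) μ := hf₂.integrable_sq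
    have hfd : Integrable (fun ω => 2 * ((∑ k ∈ range n, d k ω) * d n ω)) μ :=
      (hf₂.integrable_mul (hd₂ n)).const_mul 2
    have hsum : Integrable
        (fun ω => (∑ k ∈ range n, d k ω) ^ 2 + 2 * ((∑ k ∈ range n, d k ω) * d n ω)) μ :=
      hff.add hfd
    calc ∫ ω, (∑ k ∈ range (n + 1), d k ω) ^ 2 ∂μ
        = ∫ ω, ((∑ k ∈ range n, d k ω) ^ 2 + 2 * ((∑ k ∈ range n, d k ω) * d n ω)
            + d n ω ^ 2) ∂μ := by
          simp only [sum_range_succ]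
          congr 1
          funext ω
          ring
      _ = ∑ k ∈ range (n + 1), ∫ ω, d k ω ^ 2 ∂μ := by
          rw [integral_add hsum (hd₂ n).integrable_sq, integral_add hff hfd,
            integral_const_mul, horth, ih, sum_range_succ]
          ring

theorem ae_exists_tendsto_sum_range (hd : ∀ n, StronglyMeasurable[ℱ (n + 1)] (d n))
    (hd₂ : ∀ n, MemLp (d n) 2 μ) (hd₀ : ∀ n, μ[d n|ℱ n] =ᵐ[μ] 0)
    (hsum : Summable fun n => ∫ ω, d n ω ^ 2 ∂μ) :
    ∀ᵐ ω ∂μ, ∃ l, Tendsto (fun n => ∑ k ∈ range n, d k ω) atTop (𝓝 l) := by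
  have hbdd (n : ℕ) : eLpNorm (fun ω => ∑ k ∈ range n, d k ω) 1 μ
      ≤ ENNReal.ofReal (μ.real Set.univ + ∑' k, ∫ ω, d k ω ^ 2 ∂μ) := by
    refine (eLpNorm_one_le_of_memLp_two (memLp_finsetSum _ fun k _ => hd₂ k)).trans
      (ENNReal.ofReal_le_ofReal (add_le_add le_rfl ?_))
    rw [integral_sum_range_sq hd hd₂ hd₀ n]
    exact hsum.sum_le_tsum _ fun k _ => integral_nonneg fun ω => sq_nonneg _
  have hmart := martingale_sum_range hd (fun n => (hd₂ n).integrable one_le_two) hd₀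
  exact hmart.submartingale.exists_ae_tendsto_of_bdd hbdd

end MartingaleDifferences

theorem ae_exists_tendsto_sum_mul_sub_condExp {Ω : Type*} {m0 : MeasurableSpace Ω}
    {μ : Measure Ω} [IsFiniteMeasure μ] {ℱ : Filtration ℕ m0} {X : ℕ → Ω → ℝ}
    (hX : StronglyAdapted ℱ X) (hX₂ : ∀ n, MemLp (X n) 2 μ) {c : ℕ → ℝ}
    (hc : Summable fun n => c n ^ 2 * ∫ ω, X (n + 1) ω ^ 2 ∂μ) :
    ∀ᵐ ω ∂μ, ∃ l, Tendsto
      (fun n => ∑ k ∈ range n, c k * (X (k + 1) ω - μ[X (k + 1)|ℱ k] ω)) atTop (𝓝 l) := by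
  refine ae_exists_tendsto_sum_range (ℱ := ℱ)
    (d := fun k => c k • (X (k + 1) - μ[X (k + 1)|ℱ k]))
    (fun k => ((hX (k + 1)).sub
      (stronglyMeasurable_condExp.mono (ℱ.mono k.le_succ))).const_smul _)
    (fun k => ((hX₂ _).sub ((hX₂ _).condExp one_le_two)).const_smul _) (fun k => ?_) ?_
  · filter_upwards [condExp_smul (c k) (X (k + 1) - μ[X (k + 1)|ℱ k]) (ℱ k),
      condExp_sub_condExp (ℱ.le k) ((hX₂ (k + 1)).integrable one_le_two)] with ω h₁ h₂
    simp [h₁, h₂]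
  · refine hc.of_nonneg_of_le (fun n => integral_nonneg fun ω => sq_nonneg _) fun n => ?_
    simp only [Pi.smul_apply, Pi.sub_apply, smul_eq_mul, mul_pow, integral_const_mul]
    exact mul_le_mul_of_nonneg_left (integral_sub_condExp_sq_le (ℱ.le n) (hX₂ _))
      (sq_nonneg _)

theorem stmt1
    {Ω : Type*} {m0 : MeasurableSpace Ω} {μ : Measure Ω} [IsProbabilityMeasure μ]
    (𝒢 : ℕ → MeasurableSpace Ω) (h𝒢mono : Monotone 𝒢) (h𝒢le : ∀ n, 𝒢 n ≤ m0)
    (Y : ℕ → Ω → ℝ) (hadp : ∀ n, Measurable[𝒢 n] (Y n))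
    (hL2 : ∀ n, MemLp (Y n) 2 μ)
    (hsum : Summable (fun n : ℕ => (∫ ω, (Y (n + 1) ω) ^ 2 ∂μ) / ((n + 1 : ℝ)) ^ 2))
    (Ylim : Ω → ℝ)
    (hce : ∀ᵐ ω ∂μ, Tendsto (fun n => (μ[Y (n + 1)|𝒢 n]) ω) atTop (𝓝 (Ylim ω))) :
    ∀ᵐ ω ∂μ, Tendsto
      (fun n : ℕ => (n : ℝ) * ∑' k : ℕ, Y (n + k) ω / ((n + k : ℕ) : ℝ) ^ 2)
      atTop (𝓝 (Ylim ω)) := by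
  let ℱ : Filtration ℕ m0 := ⟨𝒢, h𝒢mono, h𝒢le⟩
  have hmart := ae_exists_tendsto_sum_mul_sub_condExp (ℱ := ℱ)
    (fun n => (hadp n).stronglyMeasurable) hL2 (c := fun n => ((n : ℝ) + 1)⁻¹)
    (hsum.congr fun n => by simp [div_eq_inv_mul])
  have hYsq := ae_summable_of_summable_integral (μ := μ)
    (f := fun n ω => Y (n + 1) ω ^ 2 / ((n : ℝ) + 1) ^ 2) (fun n ω => by positivity)
    (fun n => (hL2 (n + 1)).integrable_sq.div_const _) (by simpa [integral_div] using hsum)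
  filter_upwards [hce, hmart, hYsq] with ω hbω ⟨l, hl⟩ hYω
  set b : ℕ → ℝ := fun j => μ[Y (j + 1)|𝒢 j] ω
  have hb := summable_div_add_one_sq_of_tendsto hbω
  have hY := summable_div_add_one_sq_of_summable_sq hYω
  have hd : Summable fun j => (Y (j + 1) ω - b j) / ((j : ℝ) + 1) ^ 2 := by
    simpa only [sub_div] using hY.sub hb
  have hsplit (m : ℕ) : tailMean (fun j => Y (j + 1) ω) m
      = tailMean b m + tailMean (fun j => Y (j + 1) ω - b j) m := by
    rw [← tailMean_add hb hd]
    congr 1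
    funext j
    simp
  have hlim : Tendsto (tailMean fun j => Y (j + 1) ω) atTop (𝓝 (Ylim ω)) := by
    rw [funext hsplit, ← add_zero (Ylim ω)]
    refine (tendsto_tailMean_of_tendsto hbω).add
      (tendsto_tailMean_zero_of_tendsto_sum hd (l := l) ?_)
    simpa only [inv_mul_eq_div] using hl
  rw [← tendsto_add_atTop_iff_nat 1]
  exact hlim.congr fun m => (natCast_mul_tsum_eq_tailMean (fun i => Y i ω) m).symm
end

section
/- Under condition (basic), with Z the a.s. limit of the quasi-martingale Z_n and L_n = Z_n − ∑_{k=0}^{n−1}(E[Z_{k+1} | G_k] − Z_k) the associated martingale with a.s. limit L, one has E|√n (Z_n − Z) − √n (L_n − L)| ≤ √n ∑_{k≥n} E|Z_k − E[Z_{k+1} | G_k]| → 0 as n → ∞. -/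
/-!
Since `L n - Z n = ∑ k < n, (Z k - E[Z (k+1) | G k])`, the quantity `(Z n - Z) - (L n - L)` is, up
to sign, the tail `∑ k ≥ n` of this series, and Fatou's lemma bounds its L¹ norm by the sum of the
L¹ norms of the tail terms. The rate `k ^ (3/2) E|Z k - E[Z (k+1) | G k]| → 0`, compared with the
estimate `∑ k ≥ n, k ^ (-3/2) ≤ 3 n ^ (-1/2)` obtained from `∫ x ^ (-3/2)`, makes this tail
`o(n ^ (-1/2))`.
-/

open MeasureTheory Filter Real
open scoped Topology

theorem tsum_nat_add_rpow_neg_le {p : ℝ} (hp : 1 < p) {n : ℕ} (hn : 0 < n) :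
    ∑' k : ℕ, ((n + k : ℕ) : ℝ) ^ (-p) ≤ p / (p - 1) * (n : ℝ) ^ (1 - p) := by
  have hn' : (0 : ℝ) < n := by exact_mod_cast hn
  have hterm : ∀ k : ℕ, 0 ≤ ((n + k : ℕ) : ℝ) ^ (-p) := fun k => by positivity
  refine Real.tsum_le_of_sum_range_le hterm fun m => ?_
  have hintegral : ∫ x in (n : ℝ)..n + m, x ^ (-p) ≤ (n : ℝ) ^ (1 - p) / (p - 1) := by
    have hzero : (0 : ℝ) ∉ Set.uIcc (n : ℝ) (n + m) := by
      rw [Set.uIcc_of_le (by linarith [m.cast_nonneg (α := ℝ)])]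
      exact fun h => hn'.not_ge h.1
    rw [integral_rpow (Or.inr ⟨by linarith, hzero⟩), show -p + 1 = -(p - 1) by ring,
      div_neg, ← neg_div, neg_sub, show 1 - p = -(p - 1) by ring]
    gcongr
    exact sub_le_self _ (by positivity)
  have hantitone : AntitoneOn (fun x : ℝ => x ^ (-p)) (Set.Icc (n : ℝ) (n + m)) :=
    fun x hx y _ hxy => rpow_le_rpow_of_nonpos (hn'.trans_le hx.1) hxy (by linarith)
  have hfirst : (n : ℝ) ^ (-p) ≤ (n : ℝ) ^ (1 - p) :=
    rpow_le_rpow_of_exponent_le (by exact_mod_cast hn) (by linarith)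
  calc ∑ k ∈ Finset.range m, ((n + k : ℕ) : ℝ) ^ (-p)
      ≤ ∑ k ∈ Finset.range (m + 1), ((n + k : ℕ) : ℝ) ^ (-p) :=
        Finset.sum_le_sum_of_subset_of_nonneg (by simp) fun k _ _ => hterm k
    _ = ∑ i ∈ Finset.range m, ((n : ℝ) + ((i + 1 : ℕ) : ℝ)) ^ (-p) + (n : ℝ) ^ (-p) := by
        rw [Finset.sum_range_succ']; push_cast; simp
    _ ≤ (n : ℝ) ^ (1 - p) / (p - 1) + (n : ℝ) ^ (1 - p) :=
        add_le_add ((hantitone.sum_le_integral).trans hintegral) hfirst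
    _ = p / (p - 1) * (n : ℝ) ^ (1 - p) := by
        field_simp [(by linarith : p - 1 ≠ 0)]; ring

section RateToTail

variable {a : ℕ → ℝ} {p : ℝ}

theorem eventually_le_mul_rpow_neg_of_tendsto
    (h : Tendsto (fun k : ℕ => (k : ℝ) ^ p * a k) atTop (𝓝 0)) {c : ℝ} (hc : 0 < c) :
    ∀ᶠ k : ℕ in atTop, a k ≤ c * (k : ℝ) ^ (-p) := by
  filter_upwards [h.eventually (eventually_le_nhds hc), eventually_gt_atTop 0] with k hk hk0
  have hk0' : (0 : ℝ) < k := by exact_mod_cast hk0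
  rwa [rpow_neg hk0'.le, ← div_eq_mul_inv, le_div_iff₀ (by positivity), mul_comm]

theorem summable_of_tendsto_rpow_mul (hp : 1 < p)
    (h : Tendsto (fun k : ℕ => (k : ℝ) ^ p * a k) atTop (𝓝 0)) (ha : ∀ k, 0 ≤ a k) :
    Summable a := by
  refine Summable.of_norm_bounded_eventually_nat (summable_nat_rpow.2 (neg_lt_neg hp)) ?_
  filter_upwards [eventually_le_mul_rpow_neg_of_tendsto h one_pos] with k hk
  rwa [Real.norm_of_nonneg (ha k), ← one_mul ((k : ℝ) ^ (-p))]

theorem tendsto_rpow_mul_tsum_nat_add (hp : 1 < p)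
    (h : Tendsto (fun k : ℕ => (k : ℝ) ^ p * a k) atTop (𝓝 0)) (ha : ∀ k, 0 ≤ a k) :
    Tendsto (fun n : ℕ => (n : ℝ) ^ (p - 1) * ∑' k, a (n + k)) atTop (𝓝 0) := by
  have hp' : 0 < p / (p - 1) := div_pos (by linarith) (by linarith)
  have hsum := summable_of_tendsto_rpow_mul hp h ha
  have hsum_rpow : Summable fun k : ℕ => (k : ℝ) ^ (-p) := summable_nat_rpow.2 (neg_lt_neg hp)
  refine tendsto_order.2 ⟨fun ε hε => Eventually.of_forall fun n =>
    hε.trans_le (mul_nonneg (by positivity) (tsum_nonneg fun k => ha (n + k))), fun ε hε => ?_⟩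
  obtain ⟨N, hN⟩ := (eventually_le_mul_rpow_neg_of_tendsto h
    (div_pos (half_pos hε) hp')).exists_forall_of_atTop
  filter_upwards [eventually_ge_atTop (N + 1)] with n hn
  have hn0 : (0 : ℝ) < n := by exact_mod_cast (N.succ_pos.trans_le hn)
  calc (n : ℝ) ^ (p - 1) * ∑' k, a (n + k)
      ≤ (n : ℝ) ^ (p - 1) * ∑' k : ℕ, ε / 2 / (p / (p - 1)) * ((n + k : ℕ) : ℝ) ^ (-p) := by
        refine mul_le_mul_of_nonneg_left ?_ (by positivity)
        exact (hsum.comp_injective (add_right_injective n)).tsum_le_tsum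
          (fun k => hN _ (by omega))
          ((hsum_rpow.comp_injective (add_right_injective n)).mul_left _)
    _ ≤ (n : ℝ) ^ (p - 1) * (ε / 2 / (p / (p - 1)) * (p / (p - 1) * (n : ℝ) ^ (1 - p))) := by
        rw [tsum_mul_left]
        gcongr
        exact tsum_nat_add_rpow_neg_le hp (by omega)
    _ = ε / 2 := by
        rw [show (1 - p) = -(p - 1) by ring, rpow_neg hn0.le]
        field_simp [(by linarith : p - 1 ≠ 0)]
    _ < ε := half_lt_self hε

end RateToTail

section Integral

variable {α E : Type*} [MeasurableSpace α] {μ : Measure α} [NormedAddCommGroup E]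

theorem integral_norm_le_of_tendsto_ae {f : ℕ → α → E} {g : α → E} {C : ℝ}
    (hf : ∀ n, Integrable (f n) μ)
    (hlim : ∀ᵐ x ∂μ, Tendsto (fun n => f n x) atTop (𝓝 (g x)))
    (hC : ∀ᶠ n in atTop, ∫ x, ‖f n x‖ ∂μ ≤ C) :
    ∫ x, ‖g x‖ ∂μ ≤ C := by
  have hC0 : 0 ≤ C := by
    obtain ⟨n, hn⟩ := hC.exists
    exact (integral_nonneg fun x => norm_nonneg _).trans hn
  have hg : AEStronglyMeasurable g μ :=
    aestronglyMeasurable_of_tendsto_ae atTop (fun n => (hf n).aestronglyMeasurable) hlim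
  rw [integral_norm_eq_lintegral_enorm hg, ← eLpNorm_one_eq_lintegral_enorm]
  refine ENNReal.toReal_le_of_le_ofReal hC0 <|
    Lp.eLpNorm_le_of_ae_tendsto ?_ (fun n => (hf n).aestronglyMeasurable) hlim
  filter_upwards [hC] with n hn
  rw [eLpNorm_one_eq_lintegral_enorm, ← ofReal_integral_norm_eq_lintegral_enorm (hf n)]
  exact ENNReal.ofReal_le_ofReal hn

theorem integral_norm_sub_sum_range_le_tsum {d : ℕ → α → E} {S : α → E}
    (hd : ∀ k, Integrable (d k) μ) (hsum : Summable fun k => ∫ x, ‖d k x‖ ∂μ)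
    (hS : ∀ᵐ x ∂μ, Tendsto (fun m => ∑ k ∈ Finset.range m, d k x) atTop (𝓝 (S x))) (n : ℕ) :
    ∫ x, ‖S x - ∑ k ∈ Finset.range n, d k x‖ ∂μ ≤ ∑' k, ∫ x, ‖d (n + k) x‖ ∂μ := by
  refine integral_norm_le_of_tendsto_ae
    (f := fun m x => ∑ k ∈ Finset.range m, d k x - ∑ k ∈ Finset.range n, d k x)
    (fun m => (integrable_finsetSum _ fun k _ => hd k).sub
      (integrable_finsetSum _ fun k _ => hd k))
    (hS.mono fun x hx => hx.sub_const _) ?_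
  filter_upwards [eventually_ge_atTop n] with m hm
  obtain ⟨j, rfl⟩ := Nat.exists_eq_add_of_le hm
  calc ∫ x, ‖∑ k ∈ Finset.range (n + j), d k x - ∑ k ∈ Finset.range n, d k x‖ ∂μ
      = ∫ x, ‖∑ k ∈ Finset.range j, d (n + k) x‖ ∂μ := by
        simp only [Finset.sum_range_add, add_sub_cancel_left]
    _ ≤ ∫ x, ∑ k ∈ Finset.range j, ‖d (n + k) x‖ ∂μ :=
        integral_mono_of_nonneg (Eventually.of_forall fun x => norm_nonneg _)
          (integrable_finsetSum _ fun k _ => (hd _).norm)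
          (Eventually.of_forall fun x => norm_sum_le _ _)
    _ = ∑ k ∈ Finset.range j, ∫ x, ‖d (n + k) x‖ ∂μ :=
        integral_finsetSum _ fun k _ => (hd _).norm
    _ ≤ ∑' k, ∫ x, ‖d (n + k) x‖ ∂μ :=
        (hsum.comp_injective (add_right_injective n)).sum_le_tsum _
          fun k _ => integral_nonneg fun x => norm_nonneg _

end Integral

theorem stmt5_general
    {Ω : Type*} {m0 : MeasurableSpace Ω} {μ : Measure Ω}
    (𝒢 : ℕ → MeasurableSpace Ω)
    (X : ℕ → Ω → ℝ)
    (Z : ℕ → Ω → ℝ) (hZ : ∀ n, Z n = μ[X (n + 1)|𝒢 n])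
    (hrate : Tendsto
      (fun k : ℕ => (k : ℝ) ^ ((3 : ℝ) / 2) * ∫ ω, |Z k ω - (μ[Z (k + 1)|𝒢 k]) ω| ∂μ)
      atTop (𝓝 0))
    (Zlim : Ω → ℝ)
    (hZlim : ∀ᵐ ω ∂μ, Tendsto (fun n => Z n ω) atTop (𝓝 (Zlim ω)))
    (L : ℕ → Ω → ℝ)
    (hL : ∀ n ω, L n ω =
      Z n ω - ∑ k ∈ Finset.range n, ((μ[Z (k + 1)|𝒢 k]) ω - Z k ω))
    (Llim : Ω → ℝ)
    (hLlim : ∀ᵐ ω ∂μ, Tendsto (fun n => L n ω) atTop (𝓝 (Llim ω))) :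
    (∀ n : ℕ,
      ∫ ω, |Real.sqrt n * (Z n ω - Zlim ω) - Real.sqrt n * (L n ω - Llim ω)| ∂μ ≤
        Real.sqrt n * ∑' k : ℕ, ∫ ω, |Z (n + k) ω - (μ[Z (n + k + 1)|𝒢 (n + k)]) ω| ∂μ) ∧
    Tendsto
      (fun n : ℕ =>
        Real.sqrt n * ∑' k : ℕ, ∫ ω, |Z (n + k) ω - (μ[Z (n + k + 1)|𝒢 (n + k)]) ω| ∂μ)
      atTop (𝓝 0) := by
  set d : ℕ → Ω → ℝ := fun k ω => Z k ω - (μ[Z (k + 1)|𝒢 k]) ω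
  have hd : ∀ k, Integrable (d k) μ := fun k =>
    (hZ k ▸ integrable_condExp).sub integrable_condExp
  have hd_nonneg : ∀ k, 0 ≤ ∫ ω, |d k ω| ∂μ := fun k => integral_nonneg fun ω => abs_nonneg _
  have hLZ : ∀ n ω, L n ω - Z n ω = ∑ k ∈ Finset.range n, d k ω := fun n ω => by
    simp only [hL, d, Finset.sum_sub_distrib]; ring
  have hpartial : ∀ᵐ ω ∂μ, Tendsto (fun n => ∑ k ∈ Finset.range n, d k ω) atTop
      (𝓝 (Llim ω - Zlim ω)) := by
    filter_upwards [hZlim, hLlim] with ω hZω hLω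
    simpa only [hLZ] using hLω.sub hZω
  refine ⟨fun n => ?_, ?_⟩
  · have hpoint : ∀ ω,
        |Real.sqrt n * (Z n ω - Zlim ω) - Real.sqrt n * (L n ω - Llim ω)| =
          Real.sqrt n * ‖(Llim ω - Zlim ω) - ∑ k ∈ Finset.range n, d k ω‖ := fun ω => by
      rw [← hLZ, Real.norm_eq_abs, ← abs_of_nonneg (Real.sqrt_nonneg n), ← abs_mul,
        abs_of_nonneg (Real.sqrt_nonneg n)]
      ring_nf
    simp_rw [hpoint, integral_const_mul]
    gcongr
    exact integral_norm_sub_sum_range_le_tsum hd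
      (summable_of_tendsto_rpow_mul (by norm_num) hrate hd_nonneg) hpartial n
  · simpa only [Real.sqrt_eq_rpow, show (3 : ℝ) / 2 - 1 = 1 / 2 by norm_num] using
      tendsto_rpow_mul_tsum_nat_add (by norm_num) hrate hd_nonneg

theorem stmt5
    {Ω : Type*} {m0 : MeasurableSpace Ω} {μ : Measure Ω} [IsProbabilityMeasure μ]
    (𝒢 : ℕ → MeasurableSpace Ω) (h𝒢mono : Monotone 𝒢) (h𝒢le : ∀ n, 𝒢 n ≤ m0)
    (X : ℕ → Ω → ℝ) (hadp : ∀ n, 1 ≤ n → Measurable[𝒢 n] (X n))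
    (hL2 : ∀ n, MemLp (X n) 2 μ)
    (K : ℝ) (hK : ∀ n, ∫ ω, (X n ω) ^ 2 ∂μ ≤ K)
    (Z : ℕ → Ω → ℝ) (hZ : ∀ n, Z n = μ[X (n + 1)|𝒢 n])
    (hbasic : Tendsto
      (fun n : ℕ => (n : ℝ) ^ 3 * ∫ ω, ((μ[Z (n + 1)|𝒢 n]) ω - Z n ω) ^ 2 ∂μ)
      atTop (𝓝 0))
    (hrate : Tendsto
      (fun k : ℕ => (k : ℝ) ^ ((3 : ℝ) / 2) * ∫ ω, |Z k ω - (μ[Z (k + 1)|𝒢 k]) ω| ∂μ)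
      atTop (𝓝 0))
    (Zlim : Ω → ℝ)
    (hZlim : ∀ᵐ ω ∂μ, Tendsto (fun n => Z n ω) atTop (𝓝 (Zlim ω)))
    (hZL1 : Tendsto (fun n => ∫ ω, |Z n ω - Zlim ω| ∂μ) atTop (𝓝 0))
    (L : ℕ → Ω → ℝ)
    (hL : ∀ n ω, L n ω =
      Z n ω - ∑ k ∈ Finset.range n, ((μ[Z (k + 1)|𝒢 k]) ω - Z k ω))
    (Llim : Ω → ℝ)
    (hLlim : ∀ᵐ ω ∂μ, Tendsto (fun n => L n ω) atTop (𝓝 (Llim ω)))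
    (hLL1 : Tendsto (fun n => ∫ ω, |L n ω - Llim ω| ∂μ) atTop (𝓝 0)) :
    (∀ n : ℕ,
      ∫ ω, |Real.sqrt n * (Z n ω - Zlim ω) - Real.sqrt n * (L n ω - Llim ω)| ∂μ ≤
        Real.sqrt n * ∑' k : ℕ, ∫ ω, |Z (n + k) ω - (μ[Z (n + k + 1)|𝒢 (n + k)]) ω| ∂μ) ∧
    Tendsto
      (fun n : ℕ =>
        Real.sqrt n * ∑' k : ℕ, ∫ ω, |Z (n + k) ω - (μ[Z (n + k + 1)|𝒢 (n + k)]) ω| ∂μ)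
      atTop (𝓝 0) :=
  stmt5_general (m0 := m0) 𝒢 X Z hZ hrate Zlim hZlim L hL Llim hLlim
end

section
/- With Y_{n,k} = (X_k − Z_{k−1} + k(E[Z_k | G_{k−1}] − Z_k))/√n and Q_n = n^{−1/2} ∑_{k=1}^n k(Z_{k−1} − E[Z_k | G_{k−1}]), one has the decomposition C_n = ∑_{k=1}^n Y_{n,k} + Q_n, and under condition (basic), E|Q_n| → 0 as n → ∞. -/
/-!
The decomposition is the telescoping identity
`∑_{k ≤ n} ((k - 1) Z_{k-1} - k Z_k) = -n Z_n`.
For `Q_n`, Cauchy–Schwarz gives `E|Z_{k-1} - E[Z_k | G_{k-1}]| ≤ δ_{k-1}^{1/2}` with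
`δ_j = E[(E[Z_{j+1} | G_j] - Z_j)^2]`, and `j³ δ_j → 0` makes `k δ_{k-1}^{1/2} = o(k^{-1/2})`;
since `∑_{k ≤ n} k^{-1/2} ≍ √n`, the sum defining `E|Q_n|` is `o(√n)`.
-/

open MeasureTheory Filter Real
open scoped Topology

lemma sum_Icc_sub_one_mul_sub_mul (x z : ℕ → ℝ) (n : ℕ) :
    ∑ k ∈ Finset.Icc 1 n, (x k - z (k - 1) + k * (z (k - 1) - z k)) =
      ∑ k ∈ Finset.Icc 1 n, x k - n * z n := by
  induction n with
  | zero => simp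
  | succ n ih =>
    rw [Finset.sum_Icc_succ_top (by omega), Finset.sum_Icc_succ_top (by omega), ih]
    push_cast
    ring

lemma sqrt_mul_average_sub_eq (x z w : ℕ → ℝ) {n : ℕ} (hn : 1 ≤ n) :
    √n * ((1 / (n : ℝ)) * ∑ k ∈ Finset.Icc 1 n, x k - z n) =
      ∑ k ∈ Finset.Icc 1 n, (x k - z (k - 1) + k * (w k - z k)) / √n +
        (1 / √n) * ∑ k ∈ Finset.Icc 1 n, (k : ℝ) * (z (k - 1) - w k) := by
  have hn0 : (0 : ℝ) < n := by exact_mod_cast hn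
  have hsq : √(n : ℝ) * √n = n := mul_self_sqrt hn0.le
  have hs : 0 < √(n : ℝ) := sqrt_pos.2 hn0
  have hrhs : ∑ k ∈ Finset.Icc 1 n, (x k - z (k - 1) + k * (w k - z k)) / √n +
      (1 / √n) * ∑ k ∈ Finset.Icc 1 n, (k : ℝ) * (z (k - 1) - w k) =
      (∑ k ∈ Finset.Icc 1 n, x k - n * z n) / √n := by
    rw [← sum_Icc_sub_one_mul_sub_mul, Finset.sum_div, Finset.mul_sum, ← Finset.sum_add_distrib]
    refine Finset.sum_congr rfl fun k _ => ?_
    field_simp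
    ring
  rw [hrhs]
  field_simp
  linear_combination (∑ k ∈ Finset.Icc 1 n, x k - n * z n) * hsq

lemma sum_Icc_one_eq_sum_range (f : ℕ → ℝ) (n : ℕ) :
    ∑ k ∈ Finset.Icc 1 n, f k = ∑ j ∈ Finset.range n, f (j + 1) := by
  rw [Finset.range_eq_Ico, Finset.sum_Ico_add' f, Finset.Ico_add_one_right_eq_Icc, zero_add]

lemma sqrt_le_sum_range_inv_sqrt_succ (n : ℕ) :
    √n ≤ ∑ j ∈ Finset.range n, (√((j : ℝ) + 1))⁻¹ := by
  have hterm : ∀ j ∈ Finset.range n, (√(n : ℝ))⁻¹ ≤ (√((j : ℝ) + 1))⁻¹ := fun j hj => by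
    have : (j : ℝ) + 1 ≤ n := by exact_mod_cast Finset.mem_range.1 hj
    gcongr
  calc √(n : ℝ) = (Finset.range n).card • (√(n : ℝ))⁻¹ := by
        rw [Finset.card_range, nsmul_eq_mul, ← div_eq_mul_inv, div_sqrt]
    _ ≤ _ := Finset.card_nsmul_le_sum _ _ _ hterm

lemma sum_range_inv_sqrt_succ_le (n : ℕ) :
    ∑ j ∈ Finset.range n, (√((j : ℝ) + 1))⁻¹ ≤ 2 * √n := by
  induction n with
  | zero => simp
  | succ n ih =>
    rw [Finset.sum_range_succ]
    push_cast
    have hs : 0 < √((n : ℝ) + 1) := sqrt_pos.2 (by positivity)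
    have h1 : √((n : ℝ) + 1) ^ 2 = n + 1 := sq_sqrt (by positivity)
    have h0 : √(n : ℝ) ^ 2 = n := sq_sqrt (by positivity)
    have : (√((n : ℝ) + 1))⁻¹ ≤ 2 * (√((n : ℝ) + 1) - √n) := by
      -- `2 (√(n+1) - √n) √(n+1) - 1 = (√(n+1) - √n)²`
      rw [inv_le_iff_one_le_mul₀ hs]
      nlinarith [sq_nonneg (√((n : ℝ) + 1) - √n)]
    linarith

lemma tendsto_sum_range_div_sqrt_of_tendsto_sqrt_mul {f : ℕ → ℝ}
    (hf : Tendsto (fun j : ℕ => √((j : ℝ) + 1) * f j) atTop (𝓝 0)) :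
    Tendsto (fun n : ℕ => (∑ j ∈ Finset.range n, f j) / √n) atTop (𝓝 0) := by
  have hg : ∀ j : ℕ, 0 < (√((j : ℝ) + 1))⁻¹ := fun j => by positivity
  have hfo : f =o[atTop] fun j : ℕ => (√((j : ℝ) + 1))⁻¹ := by
    rw [Asymptotics.isLittleO_iff_tendsto fun j h => absurd h (hg j).ne']
    simpa [div_inv_eq_mul, mul_comm] using hf
  have hsum_top : Tendsto (fun n : ℕ => ∑ j ∈ Finset.range n, (√((j : ℝ) + 1))⁻¹) atTop atTop :=
    tendsto_atTop_mono sqrt_le_sum_range_inv_sqrt_succ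
      (tendsto_sqrt_atTop.comp tendsto_natCast_atTop_atTop)
  have hsum_O : (fun n : ℕ => ∑ j ∈ Finset.range n, (√((j : ℝ) + 1))⁻¹) =O[atTop]
      fun n : ℕ => √n := by
    refine Asymptotics.IsBigO.of_bound 2 (Eventually.of_forall fun n => ?_)
    rw [norm_of_nonneg (Finset.sum_nonneg fun j _ => (hg j).le), norm_of_nonneg (sqrt_nonneg _)]
    exact sum_range_inv_sqrt_succ_le n
  exact ((hfo.sum_range (fun j => (hg j).le) hsum_top).trans_isBigO hsum_O).tendsto_div_nhds_zero

lemma tendsto_sum_range_succ_mul_sqrt_div_sqrt {a : ℕ → ℝ} (ha : ∀ j, 0 ≤ a j)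
    (h : Tendsto (fun j : ℕ => (j : ℝ) ^ 3 * a j) atTop (𝓝 0)) :
    Tendsto (fun n : ℕ => (∑ j ∈ Finset.range n, ((j : ℝ) + 1) * √(a j)) / √n)
      atTop (𝓝 0) := by
  refine tendsto_sum_range_div_sqrt_of_tendsto_sqrt_mul ?_
  have hcube : Tendsto (fun j : ℕ => ((j : ℝ) + 1) ^ 3 * a j) atTop (𝓝 0) := by
    refine squeeze_zero' (Eventually.of_forall fun j => mul_nonneg (by positivity) (ha j)) ?_
      (by simpa using h.const_mul 8)
    filter_upwards [eventually_ge_atTop 1] with j hj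
    have hj : (1 : ℝ) ≤ j := by exact_mod_cast hj
    have : ((j : ℝ) + 1) ^ 3 ≤ 8 * (j : ℝ) ^ 3 := by
      calc ((j : ℝ) + 1) ^ 3 ≤ (2 * j) ^ 3 := by gcongr; linarith
        _ = 8 * (j : ℝ) ^ 3 := by ring
    rw [← mul_assoc]
    exact mul_le_mul_of_nonneg_right this (ha j)
  have := hcube.sqrt
  rw [sqrt_zero] at this
  refine this.congr fun j => ?_
  rw [sqrt_mul (by positivity), show ((j : ℝ) + 1) ^ 3 = ((j : ℝ) + 1) * ((j : ℝ) + 1) ^ 2 by ring,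
    sqrt_mul (by positivity), sqrt_sq (by positivity)]
  ring

lemma integral_abs_le_sqrt_integral_sq {Ω : Type*} {m0 : MeasurableSpace Ω} {μ : Measure Ω}
    [IsProbabilityMeasure μ] {f : Ω → ℝ} (hf : MemLp f 2 μ) :
    ∫ ω, |f ω| ∂μ ≤ √(∫ ω, f ω ^ 2 ∂μ) := by
  have hvar := ProbabilityTheory.variance_nonneg |f| μ
  rw [ProbabilityTheory.variance_eq_sub hf.abs] at hvar
  refine le_sqrt_of_sq_le ?_
  simpa [sq_abs] using hvar

lemma integral_abs_sum_mul_le {Ω ι : Type*} {m0 : MeasurableSpace Ω} {μ : Measure Ω}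
    [IsProbabilityMeasure μ] (s : Finset ι) (c : ι → ℝ) {D : ι → Ω → ℝ}
    (hD : ∀ i ∈ s, MemLp (D i) 2 μ) :
    ∫ ω, |∑ i ∈ s, c i * D i ω| ∂μ ≤ ∑ i ∈ s, |c i| * √(∫ ω, D i ω ^ 2 ∂μ) := by
  have hint : ∀ i ∈ s, Integrable (fun ω => |c i * D i ω|) μ := fun i hi =>
    (((hD i hi).integrable one_le_two).const_mul (c i)).abs
  calc ∫ ω, |∑ i ∈ s, c i * D i ω| ∂μ ≤ ∫ ω, ∑ i ∈ s, |c i * D i ω| ∂μ :=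
        integral_mono_of_nonneg (Eventually.of_forall fun ω => abs_nonneg _)
          (integrable_finsetSum s hint)
          (Eventually.of_forall fun ω => Finset.abs_sum_le_sum_abs _ _)
    _ = ∑ i ∈ s, |c i| * ∫ ω, |D i ω| ∂μ := by
        rw [integral_finsetSum s hint]
        simp only [abs_mul, integral_const_mul]
    _ ≤ ∑ i ∈ s, |c i| * √(∫ ω, D i ω ^ 2 ∂μ) := by
        gcongr with i hi
        exact integral_abs_le_sqrt_integral_sq (hD i hi)

theorem stmt6_general
    {Ω : Type*} {m0 : MeasurableSpace Ω} {μ : Measure Ω} [IsProbabilityMeasure μ]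
    (𝒢 : ℕ → MeasurableSpace Ω)
    (X : ℕ → Ω → ℝ)
    (hL2 : ∀ n, MemLp (X n) 2 μ)
    (Z : ℕ → Ω → ℝ) (hZ : ∀ n, Z n = μ[X (n + 1)|𝒢 n])
    (hbasic : Tendsto
      (fun n : ℕ => (n : ℝ) ^ 3 * ∫ ω, ((μ[Z (n + 1)|𝒢 n]) ω - Z n ω) ^ 2 ∂μ)
      atTop (𝓝 0))
    (C : ℕ → Ω → ℝ)
    (hC : ∀ n ω, C n ω =
      Real.sqrt n * ((1 / (n : ℝ)) * ∑ k ∈ Finset.Icc 1 n, X k ω - Z n ω))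
    (Yar : ℕ → ℕ → Ω → ℝ)
    (hYar : ∀ n k ω, Yar n k ω =
      (X k ω - Z (k - 1) ω + k * ((μ[Z k|𝒢 (k - 1)]) ω - Z k ω)) / Real.sqrt n)
    (Q : ℕ → Ω → ℝ)
    (hQ : ∀ n ω, Q n ω =
      (1 / Real.sqrt n) *
        ∑ k ∈ Finset.Icc 1 n, (k : ℝ) * (Z (k - 1) ω - (μ[Z k|𝒢 (k - 1)]) ω)) :
    (∀ n, 1 ≤ n → ∀ ω, C n ω = ∑ k ∈ Finset.Icc 1 n, Yar n k ω + Q n ω) ∧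
    Tendsto (fun n => ∫ ω, |Q n ω| ∂μ) atTop (𝓝 0) := by
  refine ⟨fun n hn ω => ?_, ?_⟩
  · simp only [hC, hYar, hQ]
    exact sqrt_mul_average_sub_eq (X · ω) (Z · ω) (fun k => (μ[Z k|𝒢 (k - 1)]) ω) hn
  set a : ℕ → ℝ := fun j => ∫ ω, ((μ[Z (j + 1)|𝒢 j]) ω - Z j ω) ^ 2 ∂μ
  have hZ2 : ∀ j, MemLp (Z j) 2 μ := fun j => hZ j ▸ (hL2 (j + 1)).condExp one_le_two
  have hQ_le (n : ℕ) :
      ∫ ω, |Q n ω| ∂μ ≤ (∑ j ∈ Finset.range n, ((j : ℝ) + 1) * √(a j)) / √n := by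
    have hQ_range : ∀ ω, Q n ω = (1 / √n) *
        ∑ j ∈ Finset.range n, ((j : ℝ) + 1) * (Z j ω - (μ[Z (j + 1)|𝒢 j]) ω) := fun ω => by
      rw [hQ, sum_Icc_one_eq_sum_range]
      simp
    have hbound := integral_abs_sum_mul_le (Finset.range n) (fun j : ℕ => (j : ℝ) + 1)
      (D := fun j ω => Z j ω - (μ[Z (j + 1)|𝒢 j]) ω)
      (fun j _ => (hZ2 j).sub ((hZ2 (j + 1)).condExp one_le_two))
    simp only [abs_of_nonneg (by positivity : (0 : ℝ) ≤ (_ : ℕ) + 1)] at hbound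
    simp only [hQ_range, one_div_mul_eq_div, abs_div, abs_of_nonneg (sqrt_nonneg _), integral_div]
    gcongr
    simpa only [a, sub_sq_comm] using hbound
  exact squeeze_zero (fun n => integral_nonneg fun ω => abs_nonneg _) hQ_le
    (tendsto_sum_range_succ_mul_sqrt_div_sqrt (fun j => integral_nonneg fun ω => sq_nonneg _)
      hbasic)

theorem stmt6
    {Ω : Type*} {m0 : MeasurableSpace Ω} {μ : Measure Ω} [IsProbabilityMeasure μ]
    (𝒢 : ℕ → MeasurableSpace Ω) (h𝒢mono : Monotone 𝒢) (h𝒢le : ∀ n, 𝒢 n ≤ m0)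
    (X : ℕ → Ω → ℝ) (hadp : ∀ n, 1 ≤ n → Measurable[𝒢 n] (X n))
    (hL2 : ∀ n, MemLp (X n) 2 μ)
    (Z : ℕ → Ω → ℝ) (hZ : ∀ n, Z n = μ[X (n + 1)|𝒢 n])
    (hbasic : Tendsto
      (fun n : ℕ => (n : ℝ) ^ 3 * ∫ ω, ((μ[Z (n + 1)|𝒢 n]) ω - Z n ω) ^ 2 ∂μ)
      atTop (𝓝 0))
    (C : ℕ → Ω → ℝ)
    (hC : ∀ n ω, C n ω =
      Real.sqrt n * ((1 / (n : ℝ)) * ∑ k ∈ Finset.Icc 1 n, X k ω - Z n ω))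
    (Yar : ℕ → ℕ → Ω → ℝ)
    (hYar : ∀ n k ω, Yar n k ω =
      (X k ω - Z (k - 1) ω + k * ((μ[Z k|𝒢 (k - 1)]) ω - Z k ω)) / Real.sqrt n)
    (Q : ℕ → Ω → ℝ)
    (hQ : ∀ n ω, Q n ω =
      (1 / Real.sqrt n) *
        ∑ k ∈ Finset.Icc 1 n, (k : ℝ) * (Z (k - 1) ω - (μ[Z k|𝒢 (k - 1)]) ω)) :
    (∀ n, 1 ≤ n → ∀ ω, C n ω = ∑ k ∈ Finset.Icc 1 n, Yar n k ω + Q n ω) ∧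
    Tendsto (fun n => ∫ ω, |Q n ω| ∂μ) atTop (𝓝 0) :=
  stmt6_general (m0 := m0) 𝒢 X hL2 Z hZ hbasic C hC Yar hYar Q hQ
end

section
/- In the randomly reinforced two-color urn with E[B_{n+1}] = E[R_{n+1}] and (B_{n+1}, R_{n+1}) independent of G_n ∨ σ(X_{n+1}), one has |E[Z_{n+1} | G_n] − Z_n| ≤ (E[B_{n+1}^2] + E[R_{n+1}^2]) / S_n^2 almost surely. -/
/-
Write `m = 𝒢 n`. Because `(B, R) = (B_{n+1}, R_{n+1})` is independent of `m ⊔ σ(X_{n+1})`, the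
conditional expectation given `m` of an expression in `(B, R)` and in `m ⊔ σ(X_{n+1})`-measurable
quantities is obtained by integrating `(B, R)` out with everything else frozen. As `X_{n+1}` has
conditional mean `Z_n`, the urn recursion then gives
`E[Z_{n+1} | m] - Z_n = Z_n (1 - Z_n) (φ_B(S_n) - φ_R(S_n))`, where `φ_F(s) = E[F / (s + F)]`.
Finally `F / s - F² / s² ≤ F / (s + F) ≤ F / s`, and the first-order terms `E F / s` of `φ_B` and
`φ_R` cancel because `E B = E R`.
-/

open MeasureTheory Filter Real ProbabilityTheory
open scoped ENNReal NNReal Topology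

lemma abs_div_add_le_one {s f : ℝ} (hs : 0 ≤ s) (hf : 0 ≤ f) : |f / (s + f)| ≤ 1 := by
  rw [abs_of_nonneg (by positivity)]
  exact div_le_one_of_le₀ (by linarith) (by linarith)

lemma div_add_mem_Icc {s f : ℝ} (hs : 0 < s) (hf : 0 ≤ f) :
    f / (s + f) ∈ Set.Icc (f / s - f ^ 2 / s ^ 2) (f / s) := by
  have hsf : 0 < s + f := by linarith
  constructor
  · rw [div_sub_div _ _ hs.ne' (by positivity), le_div_iff₀ hsf, div_mul_eq_mul_div,
      div_le_iff₀ (by positivity)]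
    nlinarith [sq_nonneg f, mul_nonneg hf (sq_nonneg f)]
  · exact div_le_div_of_nonneg_left hf hs (by linarith)

lemma urn_increment {x z s b r : ℝ} (hx : x = 0 ∨ x = 1) (hs : 0 < s) (hb : 0 ≤ b) (hr : 0 ≤ r) :
    (z * s + b * x) / (s + (b * x + r * (1 - x))) =
      z + x * (1 - z) * (b / (s + b)) - (1 - x) * z * (r / (s + r)) := by
  have hsb : s + b ≠ 0 := by positivity
  have hsr : s + r ≠ 0 := by positivity
  rcases hx with rfl | rfl
  · field_simp
    ring
  · field_simp
    ring

lemma integral_div_add_mem_Icc {Ω : Type*} {m0 : MeasurableSpace Ω} {μ : Measure Ω}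
    [IsFiniteMeasure μ] {F : Ω → ℝ} (hF0 : ∀ ω, 0 ≤ F ω) (hF : MemLp F 2 μ)
    {s : ℝ} (hs : 0 < s) :
    ∫ ω, F ω / (s + F ω) ∂μ ∈
      Set.Icc ((∫ ω, F ω ∂μ) / s - (∫ ω, F ω ^ 2 ∂μ) / s ^ 2) ((∫ ω, F ω ∂μ) / s) := by
  have hF1 : Integrable F μ := hF.integrable one_le_two
  have hF2 : Integrable (fun ω => F ω ^ 2) μ := hF.integrable_sq
  have hFs : Integrable (fun ω => F ω / (s + F ω)) μ :=
    have hFm := hF.aestronglyMeasurable.aemeasurable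
    .of_bound (hFm.div (aemeasurable_const.add hFm)).aestronglyMeasurable 1
      (Eventually.of_forall fun ω => abs_div_add_le_one hs.le (hF0 ω))
  rw [← integral_div, ← integral_div, ← integral_sub (hF1.div_const s) (hF2.div_const _)]
  exact ⟨integral_mono (by fun_prop) hFs fun ω => (div_add_mem_Icc hs (hF0 ω)).1,
    integral_mono hFs (hF1.div_const s) fun ω => (div_add_mem_Icc hs (hF0 ω)).2⟩

lemma abs_integral_div_add_sub_le {Ω : Type*} {m0 : MeasurableSpace Ω} {μ : Measure Ω}
    [IsFiniteMeasure μ] {F G : Ω → ℝ} (hF0 : ∀ ω, 0 ≤ F ω) (hG0 : ∀ ω, 0 ≤ G ω)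
    (hF : MemLp F 2 μ) (hG : MemLp G 2 μ) (hFG : ∫ ω, F ω ∂μ = ∫ ω, G ω ∂μ) {s : ℝ} (hs : 0 < s) :
    |∫ ω, F ω / (s + F ω) ∂μ - ∫ ω, G ω / (s + G ω) ∂μ| ≤
      (∫ ω, F ω ^ 2 ∂μ + ∫ ω, G ω ^ 2 ∂μ) / s ^ 2 := by
  obtain ⟨hF₁, hF₂⟩ := integral_div_add_mem_Icc hF0 hF hs
  obtain ⟨hG₁, hG₂⟩ := integral_div_add_mem_Icc hG0 hG hs
  rw [hFG] at hF₁ hF₂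
  have hF2 : 0 ≤ (∫ ω, F ω ^ 2 ∂μ) / s ^ 2 := by positivity
  have hG2 : 0 ≤ (∫ ω, G ω ^ 2 ∂μ) / s ^ 2 := by positivity
  rw [add_div, abs_sub_le_iff]
  constructor <;> linarith

theorem condExp_mul_ae_eq_of_ae_eq_condExp {Ω : Type*} {m m0 : MeasurableSpace Ω}
    {μ : Measure Ω} {X Z W : Ω → ℝ}
    (hXW : Integrable (fun ω => X ω * W ω) μ) (hX : Integrable X μ) (hW : StronglyMeasurable[m] W)
    (hZX : Z =ᵐ[μ] μ[X|m]) :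
    μ[fun ω => X ω * W ω|m] =ᵐ[μ] fun ω => Z ω * W ω := by
  filter_upwards [condExp_mul_of_stronglyMeasurable_right hW hXW hX, hZX] with ω h hZω
  exact h.trans (by simp [hZω])

namespace ProbabilityTheory

variable {Ω α β : Type*} {m m' m0 : MeasurableSpace Ω} {μ : Measure Ω} [IsFiniteMeasure μ]
  [MeasurableSpace α] [MeasurableSpace β]

theorem IndepFun.integral_comp_eq_integral_integral {P : Ω → α} {V : Ω → β}
    (hP : Measurable P) (hV : Measurable V) (hPV : IndepFun P V μ) {g : α → β → ℝ}
    (hg : StronglyMeasurable (Function.uncurry g))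
    (hint : Integrable (fun ω => g (P ω) (V ω)) μ) :
    ∫ ω, g (P ω) (V ω) ∂μ = ∫ ω, ∫ ω', g (P ω') (V ω) ∂μ ∂μ := by
  have hmap : μ.map (fun ω => (P ω, V ω)) = (μ.map P).prod (μ.map V) :=
    (indepFun_iff_map_prod_eq_prod_map_map hP.aemeasurable hV.aemeasurable).mp hPV
  have hPVm : AEMeasurable (fun ω => (P ω, V ω)) μ := (hP.prodMk hV).aemeasurable
  have hint' : Integrable (Function.uncurry g) ((μ.map P).prod (μ.map V)) := by
    rw [← hmap]
    exact (integrable_map_measure hg.aestronglyMeasurable hPVm).mpr hint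
  calc ∫ ω, g (P ω) (V ω) ∂μ = ∫ q, Function.uncurry g q ∂(μ.map fun ω => (P ω, V ω)) :=
        (integral_map hPVm hg.aestronglyMeasurable).symm
    _ = ∫ v, ∫ p, g p v ∂(μ.map P) ∂(μ.map V) := by rw [hmap, integral_prod_symm _ hint']; rfl
    _ = ∫ ω, ∫ ω', g (P ω') (V ω) ∂μ ∂μ := by
      rw [integral_map hV.aemeasurable]
      · congr 1 with ω
        exact integral_map hP.aemeasurable
          (hg.comp_measurable (measurable_id.prodMk measurable_const)).aestronglyMeasurable
      · exact (hg.comp_measurable (measurable_snd.prodMk measurable_fst)).integral_prod_right'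
          |>.aestronglyMeasurable

section Freezing

variable {γ δ : Type*} [MeasurableSpace γ] [MeasurableSpace δ]
  {Y : Ω → ℝ} {S : Ω → γ} {F : Ω → δ} {h : γ → δ → ℝ} {C : ℝ}

theorem setIntegral_mul_comp_eq_of_indep (hm' : m' ≤ m0) {A : Set Ω} (hA : MeasurableSet[m'] A)
    (hY : Measurable[m'] Y) (hYint : Integrable Y μ) (hS : Measurable[m'] S) (hF : Measurable F)
    (hh : Measurable (Function.uncurry h)) (hhC : ∀ ω ω', |h (S ω) (F ω')| ≤ C)
    (hindep : Indep (MeasurableSpace.comap F inferInstance) m' μ) :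
    ∫ ω in A, Y ω * h (S ω) (F ω) ∂μ = ∫ ω in A, Y ω * ∫ ω', h (S ω) (F ω') ∂μ ∂μ := by
  have hA0 : MeasurableSet A := hm' A hA
  set V : Ω → ℝ × γ := fun ω => (A.indicator Y ω, S ω)
  have hV : Measurable[m'] V := (hY.indicator hA).prodMk hS
  have hFV : IndepFun F V μ := by
    rw [IndepFun_iff_Indep]
    exact indep_of_indep_of_le_right hindep hV.comap_le
  have hg : StronglyMeasurable (Function.uncurry fun (f : δ) (v : ℝ × γ) => v.1 * h v.2 f) :=
    (measurable_snd.fst.mul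
      (hh.comp (measurable_snd.snd.prodMk measurable_fst))).stronglyMeasurable
  have hYh : Integrable (fun ω => Y ω * h (S ω) (F ω)) μ :=
    hYint.mul_bdd (hh.comp ((hS.mono hm' le_rfl).prodMk hF)).aestronglyMeasurable
      (Eventually.of_forall fun ω => hhC ω ω)
  rw [← integral_indicator hA0, ← integral_indicator hA0]
  simp_rw [Set.indicator_mul_left]
  rw [hFV.integral_comp_eq_integral_integral hF (hV.mono hm' le_rfl) hg]
  · simp only [V, integral_const_mul]
  · exact ((integrable_indicator_iff hA0).mpr hYh.integrableOn).congr
      (.of_forall fun ω => Set.indicator_mul_left _ _ _)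

theorem condExp_mul_comp_ae_eq_of_indep (hm : m ≤ m') (hm' : m' ≤ m0)
    (hY : Measurable[m'] Y) (hYint : Integrable Y μ) (hS : Measurable[m] S) (hF : Measurable F)
    (hh : Measurable (Function.uncurry h)) (hhC : ∀ ω ω', |h (S ω) (F ω')| ≤ C)
    (hindep : Indep (MeasurableSpace.comap F inferInstance) m' μ) :
    μ[fun ω => Y ω * h (S ω) (F ω) | m] =ᵐ[μ]
      fun ω => μ[Y|m] ω * ∫ ω', h (S ω) (F ω') ∂μ := by
  have hmm0 : m ≤ m0 := hm.trans hm'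
  have hS0 : Measurable S := hS.mono hmm0 le_rfl
  set ψ : γ → ℝ := fun s => ∫ ω', h s (F ω') ∂μ
  have hψ : Measurable ψ :=
    ((hh.comp (measurable_fst.prodMk (hF.comp measurable_snd))).stronglyMeasurable
      |>.integral_prod_right').measurable
  have hψC : ∀ ω, ‖ψ (S ω)‖ ≤ C * μ.real Set.univ := fun ω =>
    norm_integral_le_of_norm_le_const (Eventually.of_forall fun ω' => hhC ω ω')
  have hYψ : Integrable (fun ω => Y ω * ψ (S ω)) μ :=
    hYint.mul_bdd (hψ.comp hS0).aestronglyMeasurable (Eventually.of_forall hψC)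
  have hYh : Integrable (fun ω => Y ω * h (S ω) (F ω)) μ :=
    hYint.mul_bdd (hh.comp (hS0.prodMk hF)).aestronglyMeasurable
      (Eventually.of_forall fun ω => hhC ω ω)
  have : SigmaFinite (μ.trim hmm0) := (isFiniteMeasure_trim hmm0).toSigmaFinite
  refine (ae_eq_condExp_of_forall_setIntegral_eq hmm0 hYh
    (fun A _ _ => (integrable_condExp.mul_bdd (hψ.comp hS0).aestronglyMeasurable
      (Eventually.of_forall hψC)).integrableOn) (fun A hA _ => ?_)
    (stronglyMeasurable_condExp.mul (hψ.comp hS).stronglyMeasurable).aestronglyMeasurable).symm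
  calc ∫ ω in A, μ[Y|m] ω * ψ (S ω) ∂μ = ∫ ω in A, μ[fun ω => Y ω * ψ (S ω)|m] ω ∂μ :=
        setIntegral_congr_ae (hmm0 A hA) ((condExp_mul_of_stronglyMeasurable_right
          (hψ.comp hS).stronglyMeasurable hYψ hYint).mono fun ω hω _ => hω.symm)
    _ = ∫ ω in A, Y ω * ψ (S ω) ∂μ := setIntegral_condExp hmm0 hYψ hA
    _ = ∫ ω in A, Y ω * h (S ω) (F ω) ∂μ :=
        (setIntegral_mul_comp_eq_of_indep hm' (hm A hA) hY hYint (hS.mono hm le_rfl) hF hh hhC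
          hindep).symm

end Freezing

theorem condExp_mul_div_add_ae_eq_of_indep (hm : m ≤ m') (hm' : m' ≤ m0) {Y S F : Ω → ℝ}
    (hY : Measurable[m'] Y) (hYint : Integrable Y μ) (hS : Measurable[m] S) (hS0 : ∀ ω, 0 ≤ S ω)
    (hF : Measurable F) (hF0 : ∀ ω, 0 ≤ F ω)
    (hindep : Indep (MeasurableSpace.comap F inferInstance) m' μ) :
    μ[fun ω => Y ω * (F ω / (S ω + F ω)) | m] =ᵐ[μ]
      fun ω => μ[Y|m] ω * ∫ ω', F ω' / (S ω + F ω') ∂μ :=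
  condExp_mul_comp_ae_eq_of_indep (h := fun s f => f / (s + f)) hm hm' hY hYint hS hF
    (by fun_prop) (fun ω ω' => abs_div_add_le_one (hS0 ω) (hF0 ω')) hindep

theorem condExp_urn_step_ae_eq (hm : m ≤ m0) {X B R S Z Z' : Ω → ℝ}
    (hX01 : ∀ ω, X ω = 0 ∨ X ω = 1) (hB0 : ∀ ω, 0 ≤ B ω) (hR0 : ∀ ω, 0 ≤ R ω)
    (hX : Measurable X) (hB : Measurable B) (hR : Measurable R)
    (hS : Measurable[m] S) (hZ : Measurable[m] Z) (hS0 : ∀ ω, 0 ≤ S ω)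
    (hZ01 : ∀ ω, Z ω ∈ Set.Icc 0 1)
    (hindep : Indep (MeasurableSpace.comap (fun ω => (B ω, R ω)) inferInstance)
      (m ⊔ MeasurableSpace.comap X inferInstance) μ)
    (hZX : Z =ᵐ[μ] μ[X|m])
    (hZ' : ∀ ω, Z' ω = Z ω + X ω * (1 - Z ω) * (B ω / (S ω + B ω))
      - (1 - X ω) * Z ω * (R ω / (S ω + R ω))) :
    μ[Z'|m] =ᵐ[μ] fun ω => Z ω + Z ω * (1 - Z ω) *
      (∫ ω', B ω' / (S ω + B ω') ∂μ - ∫ ω', R ω' / (S ω + R ω') ∂μ) := by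
  have hm' : m ⊔ MeasurableSpace.comap X inferInstance ≤ m0 := sup_le hm hX.comap_le
  have hXm' : Measurable[m ⊔ MeasurableSpace.comap X inferInstance] X :=
    (comap_measurable X).mono le_sup_right le_rfl
  have hZm' : Measurable[m ⊔ MeasurableSpace.comap X inferInstance] Z :=
    hZ.mono le_sup_left le_rfl
  have hX1 : ∀ ω, |X ω| ≤ 1 ∧ |1 - X ω| ≤ 1 := fun ω => by
    rcases hX01 ω with h | h <;> simp [h]
  have hZ1 : ∀ ω, |Z ω| ≤ 1 ∧ |1 - Z ω| ≤ 1 := fun ω => by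
    obtain ⟨h0, h1⟩ := hZ01 ω
    exact ⟨abs_le.mpr ⟨by linarith, h1⟩, abs_le.mpr ⟨by linarith, by linarith⟩⟩
  have hXint : Integrable X μ := .of_bound hX.aestronglyMeasurable 1 (.of_forall (hX1 · |>.1))
  have hZint : Integrable Z μ :=
    .of_bound (hZ.mono hm le_rfl).aestronglyMeasurable 1 (.of_forall (hZ1 · |>.1))
  have hY₁int : Integrable (fun ω => X ω * (1 - Z ω)) μ :=
    hXint.mul_bdd (hZm'.mono hm' le_rfl |>.const_sub 1).aestronglyMeasurable
      (.of_forall (hZ1 · |>.2))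
  have hY₂int : Integrable (fun ω => (1 - X ω) * Z ω) μ :=
    ((integrable_const 1).sub hXint).mul_bdd (hZm'.mono hm' le_rfl).aestronglyMeasurable
      (.of_forall (hZ1 · |>.1))
  have hE₁ := condExp_mul_div_add_ae_eq_of_indep (Y := fun ω => X ω * (1 - Z ω)) le_sup_left hm'
    (hXm'.mul (hZm'.const_sub 1)) hY₁int hS hS0 hB hB0 (indep_of_indep_of_le_left hindep
      (MeasurableSpace.comap_le_comap_of_eq_comp _ measurable_fst rfl))
  have hE₂ := condExp_mul_div_add_ae_eq_of_indep (Y := fun ω => (1 - X ω) * Z ω) le_sup_left hm'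
    ((hXm'.const_sub 1).mul hZm') hY₂int hS hS0 hR hR0 (indep_of_indep_of_le_left hindep
      (MeasurableSpace.comap_le_comap_of_eq_comp _ measurable_snd rfl))
  have hY₁cond := condExp_mul_ae_eq_of_ae_eq_condExp hY₁int hXint
    (hZ.const_sub 1).stronglyMeasurable hZX
  have h1X : (fun ω => 1 - Z ω) =ᵐ[μ] μ[fun ω => 1 - X ω|m] := by
    filter_upwards [condExp_sub (integrable_const 1) hXint m, hZX] with ω h hZω
    exact (h.trans (by simp [condExp_const hm, hZω])).symm
  have hY₂cond := condExp_mul_ae_eq_of_ae_eq_condExp hY₂int ((integrable_const 1).sub hXint)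
    hZ.stronglyMeasurable h1X
  have hT₁ : Integrable (fun ω => X ω * (1 - Z ω) * (B ω / (S ω + B ω))) μ :=
    hY₁int.mul_bdd (hB.div ((hS.mono hm le_rfl).add hB)).aestronglyMeasurable
      (.of_forall fun ω => abs_div_add_le_one (hS0 ω) (hB0 ω))
  have hT₂ : Integrable (fun ω => (1 - X ω) * Z ω * (R ω / (S ω + R ω))) μ :=
    hY₂int.mul_bdd (hR.div ((hS.mono hm le_rfl).add hR)).aestronglyMeasurable
      (.of_forall fun ω => abs_div_add_le_one (hS0 ω) (hR0 ω))
  rw [funext hZ']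
  filter_upwards [condExp_sub (hZint.add hT₁) hT₂ m, condExp_add hZint hT₁ m, hE₁, hE₂, hY₁cond,
    hY₂cond] with ω h₁ h₂ h₃ h₄ h₅ h₆
  rw [condExp_of_stronglyMeasurable hm hZ.stronglyMeasurable hZint] at h₂
  refine h₁.trans ?_
  rw [Pi.sub_apply, h₂, Pi.add_apply, h₃, h₄, h₅, h₆]
  ring

end ProbabilityTheory

theorem ae_abs_sub_le_of_ae_eq_urn_drift {Ω : Type*} {m0 : MeasurableSpace Ω} {μ : Measure Ω}
    [IsFiniteMeasure μ] {B R S Z W : Ω → ℝ} (hB0 : ∀ ω, 0 ≤ B ω) (hR0 : ∀ ω, 0 ≤ R ω)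
    (hB : MemLp B 2 μ) (hR : MemLp R 2 μ) (hmean : ∫ ω, B ω ∂μ = ∫ ω, R ω ∂μ)
    (hSpos : ∀ ω, 0 < S ω) (hZ01 : ∀ ω, Z ω ∈ Set.Icc 0 1)
    (hW : W =ᵐ[μ] fun ω => Z ω + Z ω * (1 - Z ω) *
      (∫ ω', B ω' / (S ω + B ω') ∂μ - ∫ ω', R ω' / (S ω + R ω') ∂μ)) :
    ∀ᵐ ω ∂μ, |W ω - Z ω| ≤ (∫ ω', B ω' ^ 2 ∂μ + ∫ ω', R ω' ^ 2 ∂μ) / S ω ^ 2 := by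
  filter_upwards [hW] with ω hω
  obtain ⟨hZ0, hZ1⟩ := hZ01 ω
  have hZZ : |Z ω * (1 - Z ω)| ≤ 1 := by
    rw [abs_le]
    constructor <;> nlinarith
  rw [hω, add_sub_cancel_left, abs_mul]
  calc _ ≤ 1 * ((∫ ω', B ω' ^ 2 ∂μ + ∫ ω', R ω' ^ 2 ∂μ) / S ω ^ 2) :=
        mul_le_mul hZZ (abs_integral_div_add_sub_le hB0 hR0 hB hR hmean (hSpos ω)) (abs_nonneg _)
          zero_le_one
    _ = _ := one_mul _

section Urn

variable {Ω : Type*} {b r : ℝ} {X B R : ℕ → Ω → ℝ}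

lemma urn_terms_nonneg (hX01 : ∀ k ω, X k ω = 0 ∨ X k ω = 1) (hB0 : ∀ k ω, 0 ≤ B k ω)
    (hR0 : ∀ k ω, 0 ≤ R k ω) (k : ℕ) (ω : Ω) : 0 ≤ B k ω * X k ω ∧ 0 ≤ R k ω * (1 - X k ω) := by
  rcases hX01 k ω with h | h <;> simp [h, hB0 k ω, hR0 k ω]

lemma add_le_urn_total (ht : ∀ k ω, 0 ≤ B k ω * X k ω ∧ 0 ≤ R k ω * (1 - X k ω)) (n : ℕ) (ω : Ω) :
    b + r ≤ b + r + ∑ k ∈ Finset.Icc 1 n, (B k ω * X k ω + R k ω * (1 - X k ω)) :=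
  le_add_of_nonneg_right (Finset.sum_nonneg fun k _ => add_nonneg (ht k ω).1 (ht k ω).2)

lemma urn_fraction_mem_Icc (ht : ∀ k ω, 0 ≤ B k ω * X k ω ∧ 0 ≤ R k ω * (1 - X k ω))
    (hb : 0 ≤ b) (hr : 0 ≤ r) (n : ℕ) (ω : Ω) :
    (b + ∑ k ∈ Finset.Icc 1 n, B k ω * X k ω) /
      (b + r + ∑ k ∈ Finset.Icc 1 n, (B k ω * X k ω + R k ω * (1 - X k ω))) ∈ Set.Icc 0 1 := by
  have hN : 0 ≤ ∑ k ∈ Finset.Icc 1 n, B k ω * X k ω := Finset.sum_nonneg fun k _ => (ht k ω).1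
  have hD : 0 ≤ ∑ k ∈ Finset.Icc 1 n, R k ω * (1 - X k ω) :=
    Finset.sum_nonneg fun k _ => (ht k ω).2
  rw [Finset.sum_add_distrib]
  exact ⟨by positivity, div_le_one_of_le₀ (by linarith) (by positivity)⟩

lemma urn_fraction_succ {n : ℕ} {ω : Ω} (hX01 : X (n + 1) ω = 0 ∨ X (n + 1) ω = 1)
    (hB0 : 0 ≤ B (n + 1) ω) (hR0 : 0 ≤ R (n + 1) ω)
    (hT : 0 < b + r + ∑ k ∈ Finset.Icc 1 n, (B k ω * X k ω + R k ω * (1 - X k ω))) :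
    let N := b + ∑ k ∈ Finset.Icc 1 n, B k ω * X k ω
    let T := b + r + ∑ k ∈ Finset.Icc 1 n, (B k ω * X k ω + R k ω * (1 - X k ω))
    (b + ∑ k ∈ Finset.Icc 1 (n + 1), B k ω * X k ω) /
      (b + r + ∑ k ∈ Finset.Icc 1 (n + 1), (B k ω * X k ω + R k ω * (1 - X k ω))) =
      N / T + X (n + 1) ω * (1 - N / T) * (B (n + 1) ω / (T + B (n + 1) ω))
        - (1 - X (n + 1) ω) * (N / T) * (R (n + 1) ω / (T + R (n + 1) ω)) := by
  intro N T
  rw [← urn_increment hX01 hT hB0 hR0, div_mul_cancel₀ _ hT.ne',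
    Finset.sum_Icc_succ_top (by omega), Finset.sum_Icc_succ_top (by omega)]
  ring

lemma measurable_urn {m : MeasurableSpace Ω} {n : ℕ}
    (hmeas : ∀ k, 1 ≤ k → k ≤ n → Measurable[m] (X k) ∧ Measurable[m] (B k) ∧ Measurable[m] (R k)) :
    Measurable[m] (fun ω => b + r + ∑ k ∈ Finset.Icc 1 n, (B k ω * X k ω + R k ω * (1 - X k ω))) ∧
      Measurable[m] (fun ω => (b + ∑ k ∈ Finset.Icc 1 n, B k ω * X k ω) /
        (b + r + ∑ k ∈ Finset.Icc 1 n, (B k ω * X k ω + R k ω * (1 - X k ω)))) := by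
  have h : ∀ k ∈ Finset.Icc 1 n, Measurable[m] (X k) ∧ Measurable[m] (B k) ∧ Measurable[m] (R k) :=
    fun k hk => hmeas k (Finset.mem_Icc.1 hk).1 (Finset.mem_Icc.1 hk).2
  have hN : Measurable[m] fun ω => b + ∑ k ∈ Finset.Icc 1 n, B k ω * X k ω :=
    measurable_const.add (Finset.measurable_sum _ fun k hk => (h k hk).2.1.mul (h k hk).1)
  have hT : Measurable[m]
      fun ω => b + r + ∑ k ∈ Finset.Icc 1 n, (B k ω * X k ω + R k ω * (1 - X k ω)) :=
    measurable_const.add (Finset.measurable_sum _ fun k hk =>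
      ((h k hk).2.1.mul (h k hk).1).add ((h k hk).2.2.mul ((h k hk).1.const_sub 1)))
  exact ⟨hT, hN.div hT⟩

end Urn

theorem stmt9_general
    {Ω : Type*} {m0 : MeasurableSpace Ω} {μ : Measure Ω} [IsProbabilityMeasure μ]
    (𝒢 : ℕ → MeasurableSpace Ω) (h𝒢le : ∀ n, 𝒢 n ≤ m0)
    (b r : ℝ) (hb : 0 < b) (hr : 0 < r)
    (X B R : ℕ → Ω → ℝ)
    (hX01 : ∀ n ω, X n ω = 0 ∨ X n ω = 1)
    (hB0 : ∀ n ω, 0 ≤ B n ω) (hR0 : ∀ n ω, 0 ≤ R n ω)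
    (hmeas : ∀ n k, 1 ≤ k → k ≤ n →
      Measurable[𝒢 n] (X k) ∧ Measurable[𝒢 n] (B k) ∧ Measurable[𝒢 n] (R k))
    (hL2 : ∀ n, MemLp (B n) 2 μ ∧ MemLp (R n) 2 μ)
    (hindep : ∀ n, Indep
      (MeasurableSpace.comap (fun ω => (B (n + 1) ω, R (n + 1) ω)) inferInstance)
      (𝒢 n ⊔ MeasurableSpace.comap (X (n + 1)) inferInstance) μ)
    (hmean : ∀ n, ∫ ω, B (n + 1) ω ∂μ = ∫ ω, R (n + 1) ω ∂μ)
    (S : ℕ → Ω → ℝ)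
    (hS : ∀ n ω, S n ω =
      b + r + ∑ k ∈ Finset.Icc 1 n, (B k ω * X k ω + R k ω * (1 - X k ω)))
    (Z : ℕ → Ω → ℝ)
    (hZ : ∀ n ω, Z n ω = (b + ∑ k ∈ Finset.Icc 1 n, B k ω * X k ω) / S n ω)
    (hZcond : ∀ n, Z n =ᵐ[μ] μ[X (n + 1)|𝒢 n]) :
    ∀ n, ∀ᵐ ω ∂μ,
      |(μ[Z (n + 1)|𝒢 n]) ω - Z n ω| ≤
        (∫ ω', (B (n + 1) ω') ^ 2 ∂μ + ∫ ω', (R (n + 1) ω') ^ 2 ∂μ) / (S n ω) ^ 2 := by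
  intro n
  have ht := urn_terms_nonneg hX01 hB0 hR0
  have hSpos : ∀ ω, 0 < S n ω := fun ω => by
    rw [hS]; linarith [add_le_urn_total (b := b) (r := r) ht n ω]
  have hZ01 : ∀ ω, Z n ω ∈ Set.Icc 0 1 := fun ω => by
    rw [hZ, hS]; exact urn_fraction_mem_Icc ht hb.le hr.le n ω
  have hZsucc : ∀ ω, Z (n + 1) ω = Z n ω + X (n + 1) ω * (1 - Z n ω) *
      (B (n + 1) ω / (S n ω + B (n + 1) ω))
        - (1 - X (n + 1) ω) * Z n ω * (R (n + 1) ω / (S n ω + R (n + 1) ω)) := fun ω => by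
    rw [hZ, hS, urn_fraction_succ (hX01 _ ω) (hB0 _ ω) (hR0 _ ω) (hS n ω ▸ hSpos ω), ← hS, ← hZ]
  obtain ⟨hSm, hZm⟩ := measurable_urn (b := b) (r := r) (hmeas n)
  obtain ⟨hXm, hBm, hRm⟩ := hmeas (n + 1) (n + 1) (by omega) le_rfl
  refine ae_abs_sub_le_of_ae_eq_urn_drift (hB0 _) (hR0 _) (hL2 _).1 (hL2 _).2 (hmean n) hSpos hZ01
    (condExp_urn_step_ae_eq (h𝒢le n) (hX01 _) (hB0 _) (hR0 _) (hXm.mono (h𝒢le _) le_rfl)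
      (hBm.mono (h𝒢le _) le_rfl) (hRm.mono (h𝒢le _) le_rfl) ?_ ?_ (hSpos · |>.le) hZ01 (hindep n)
      (hZcond n) hZsucc)
  · rwa [funext (hS n)]
  · rwa [funext (hZ n), funext (hS n)]

theorem stmt9
    {Ω : Type*} {m0 : MeasurableSpace Ω} {μ : Measure Ω} [IsProbabilityMeasure μ]
    (𝒢 : ℕ → MeasurableSpace Ω) (h𝒢mono : Monotone 𝒢) (h𝒢le : ∀ n, 𝒢 n ≤ m0)
    (b r : ℝ) (hb : 0 < b) (hr : 0 < r)
    (X B R : ℕ → Ω → ℝ)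
    (hX01 : ∀ n ω, X n ω = 0 ∨ X n ω = 1)
    (hB0 : ∀ n ω, 0 ≤ B n ω) (hR0 : ∀ n ω, 0 ≤ R n ω)
    (hmeas : ∀ n k, 1 ≤ k → k ≤ n →
      Measurable[𝒢 n] (X k) ∧ Measurable[𝒢 n] (B k) ∧ Measurable[𝒢 n] (R k))
    (hL2 : ∀ n, MemLp (B n) 2 μ ∧ MemLp (R n) 2 μ)
    (hindep : ∀ n, Indep
      (MeasurableSpace.comap (fun ω => (B (n + 1) ω, R (n + 1) ω)) inferInstance)
      (𝒢 n ⊔ MeasurableSpace.comap (X (n + 1)) inferInstance) μ)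
    (hmean : ∀ n, ∫ ω, B (n + 1) ω ∂μ = ∫ ω, R (n + 1) ω ∂μ)
    (S : ℕ → Ω → ℝ)
    (hS : ∀ n ω, S n ω =
      b + r + ∑ k ∈ Finset.Icc 1 n, (B k ω * X k ω + R k ω * (1 - X k ω)))
    (Z : ℕ → Ω → ℝ)
    (hZ : ∀ n ω, Z n ω = (b + ∑ k ∈ Finset.Icc 1 n, B k ω * X k ω) / S n ω)
    (hZcond : ∀ n, Z n =ᵐ[μ] μ[X (n + 1)|𝒢 n]) :
    ∀ n, ∀ᵐ ω ∂μ,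
      |(μ[Z (n + 1)|𝒢 n]) ω - Z n ω| ≤
        (∫ ω', (B (n + 1) ω') ^ 2 ∂μ + ∫ ω', (R (n + 1) ω') ^ 2 ∂μ) / (S n ω) ^ 2 :=
  stmt9_general 𝒢 h𝒢le b r hb hr X B R hX01 hB0 hR0 hmeas hL2 hindep hmean S hS Z hZ hZcond
end

section
/- In the multicolor randomly reinforced urn with d colors, for each color j, the conditional increment satisfies |E[Z_{n+1,j} | G_n] − Z_{n,j}| ≤ (∑_{i=1}^d E[A_{n+1,i}^2]) / S_n^2 almost surely, provided E[A_{n,i}] = E[A_{n,1}] for all n and i. -/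
open MeasureTheory Filter Real ProbabilityTheory
open scoped ENNReal NNReal Topology

/-!
Let `S` be the number of balls, `T = ∑ᵢ Aᵢ Xᵢ` the number added at the next draw and
`U = Aⱼ Xⱼ` those of color `j`. The next proportion of color `j` is `(Nⱼ + U) / (S + T)`,
which differs from `Z = Nⱼ / S` by the first-order term `(U - Z T) / S` up to an error of
at most `T² / S²`. The reinforcements are independent of the past and of the draw and have a
common mean, so `E[U | 𝒢] = E[A] Z = Z E[T | 𝒢]` and the first-order term has zero
conditional mean. Exactly one ball is drawn, so `T² = ∑ᵢ Aᵢ² Xᵢ`, whence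
`E[T² | 𝒢] = ∑ᵢ E[Aᵢ²] Zᵢ ≤ ∑ᵢ E[Aᵢ²]`.
-/

theorem sq_sum_mul_eq_sum_sq_mul {ι : Type*} [Fintype ι] {x : ι → ℝ}
    (h01 : ∀ i, x i = 0 ∨ x i = 1) (hsum : ∑ i, x i = 1) (c : ι → ℝ) :
    (∑ i, c i * x i) ^ 2 = ∑ i, c i ^ 2 * x i := by
  classical
  obtain ⟨i₀, hi₀⟩ : ∃ i₀, x i₀ = 1 := by
    by_contra! h
    simp [fun i => (h01 i).resolve_right (h i)] at hsum
  have hx : x = Pi.single i₀ 1 := by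
    funext i
    rcases eq_or_ne i i₀ with rfl | hi
    · simpa using hi₀
    refine ((h01 i).resolve_right fun hxi => ?_).trans
      (Pi.single_eq_of_ne (M := fun _ => ℝ) hi 1).symm
    have := Finset.sum_le_univ_sum_of_nonneg (s := {i₀, i}) (f := x)
      fun k => (h01 k).elim (·.symm ▸ le_rfl) (·.symm ▸ zero_le_one)
    rw [Finset.sum_pair hi.symm, hi₀, hxi, hsum] at this
    norm_num at this
  subst hx
  simp [Pi.single_apply]

theorem condExp_mul_of_indep {Ω : Type*} {m mX mA m0 : MeasurableSpace Ω} {μ : Measure Ω}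
    [IsFiniteMeasure μ] (hm : m ≤ m0) (hmX : mX ≤ m0) (hmA : mA ≤ m0) {f g : Ω → ℝ}
    (hf : StronglyMeasurable[mX] f) (hg : StronglyMeasurable[mA] g)
    (hfg : Integrable (f * g) μ) (hgi : Integrable g μ) (hind : Indep mA (m ⊔ mX) μ) :
    μ[f * g|m] =ᵐ[μ] (∫ ω, g ω ∂μ) • μ[f|m] := by
  have hle : m ⊔ mX ≤ m0 := sup_le hm hmX
  calc μ[f * g|m] =ᵐ[μ] μ[μ[f * g|m ⊔ mX]|m] := (condExp_condExp_of_le le_sup_left hle).symm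
    _ =ᵐ[μ] μ[(∫ ω, g ω ∂μ) • f|m] := by
      refine condExp_congr_ae ?_
      filter_upwards [condExp_mul_of_stronglyMeasurable_left (m := m ⊔ mX)
        (hf.mono le_sup_right) hfg hgi, condExp_indep_eq hmA hle hg hind] with ω h₁ h₂
      simp [h₁, h₂, mul_comm]
    _ =ᵐ[μ] (∫ ω, g ω ∂μ) • μ[f|m] := condExp_smul _ _ _

theorem abs_div_add_sub_div_sub_le {N S U T : ℝ} (hS : 0 < S) (hT : 0 ≤ T) (hN : 0 ≤ N)
    (hNS : N ≤ S) (hU : 0 ≤ U) (hUT : U ≤ T) :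
    |(N + U) / (S + T) - N / S - (U - N / S * T) / S| ≤ T ^ 2 / S ^ 2 := by
  have hST : 0 < S + T := by linarith
  have hw : |U - N / S * T| ≤ T := by
    have : N / S ≤ 1 := (div_le_one hS).2 hNS
    rw [abs_le]; constructor <;> nlinarith [div_nonneg hN hS.le]
  have hsplit : (N + U) / (S + T) - N / S - (U - N / S * T) / S
      = -((U - N / S * T) * T / (S * (S + T))) := by
    field_simp; ring
  rw [hsplit, abs_neg, abs_div, abs_mul, abs_of_nonneg hT, abs_of_pos (mul_pos hS hST)]
  calc |U - N / S * T| * T / (S * (S + T)) ≤ T * T / (S * S) := by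
        gcongr; linarith
    _ = T ^ 2 / S ^ 2 := by ring

theorem measurable_comap_pi_apply {Ω ι : Type*} {E : ι → Type*} [∀ i, MeasurableSpace (E i)]
    (f : Ω → ∀ i, E i) (i : ι) : Measurable[MeasurableSpace.comap f inferInstance] (f · i) :=
  fun _ hs => ⟨_, measurable_pi_apply i hs, rfl⟩

section

variable {Ω ι : Type*} [Fintype ι]

/-- One draw from an urn with composition `N`, known given `m`: `X` is the indicator of the
color drawn and `A` the vector of reinforcements. -/
structure UrnStep {m0 : MeasurableSpace Ω} (μ : Measure Ω) (m : MeasurableSpace Ω)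
    (N X A : ι → Ω → ℝ) : Prop where
  le : m ≤ m0
  measurable_comp : ∀ i, Measurable[m] (N i)
  comp_nonneg : ∀ i ω, 0 ≤ N i ω
  exists_pos_le_total : ∃ s, 0 < s ∧ ∀ ω, s ≤ ∑ i, N i ω
  draw_eq_zero_or_one : ∀ i ω, X i ω = 0 ∨ X i ω = 1
  sum_draw : ∀ ω, ∑ i, X i ω = 1
  measurable_draw : ∀ i, Measurable[m0] (X i)
  condExp_draw : ∀ i, μ[X i|m] =ᵐ[μ] fun ω => N i ω / ∑ k, N k ω
  reinf_nonneg : ∀ i ω, 0 ≤ A i ω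
  measurable_reinf : ∀ i, Measurable[m0] (A i)
  memLp_reinf : ∀ i, MemLp (A i) 2 μ
  indep : Indep (MeasurableSpace.comap (fun ω i => A i ω) inferInstance)
    (m ⊔ MeasurableSpace.comap (fun ω i => X i ω) inferInstance) μ
  integral_reinf : ∀ i k, ∫ ω, A i ω ∂μ = ∫ ω, A k ω ∂μ

namespace UrnStep

variable {m m0 : MeasurableSpace Ω} {μ : Measure Ω} {N X A : ι → Ω → ℝ}

theorem draw_nonneg (h : UrnStep μ m N X A) (i : ι) (ω : Ω) : 0 ≤ X i ω := by
  rcases h.draw_eq_zero_or_one i ω with hx | hx <;> simp [hx]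

theorem draw_le_one (h : UrnStep μ m N X A) (i : ι) (ω : Ω) : X i ω ≤ 1 := by
  rcases h.draw_eq_zero_or_one i ω with hx | hx <;> simp [hx]

theorem total_pos (h : UrnStep μ m N X A) (ω : Ω) : 0 < ∑ i, N i ω := by
  obtain ⟨s, hs, hle⟩ := h.exists_pos_le_total
  exact hs.trans_le (hle ω)

theorem comp_le_total (h : UrnStep μ m N X A) (i : ι) (ω : Ω) : N i ω ≤ ∑ k, N k ω :=
  Finset.single_le_sum (fun k _ => h.comp_nonneg k ω) (Finset.mem_univ i)

theorem sum_comp_div_total (h : UrnStep μ m N X A) (ω : Ω) :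
    ∑ i, N i ω / ∑ k, N k ω = 1 := by
  rw [← Finset.sum_div, div_self (h.total_pos ω).ne']

theorem gain_nonneg (h : UrnStep μ m N X A) (ω : Ω) : 0 ≤ ∑ i, A i ω * X i ω :=
  Finset.sum_nonneg fun i _ => mul_nonneg (h.reinf_nonneg i ω) (h.draw_nonneg i ω)

theorem reinf_mul_draw_le_gain (h : UrnStep μ m N X A) (j : ι) (ω : Ω) :
    A j ω * X j ω ≤ ∑ i, A i ω * X i ω :=
  Finset.single_le_sum (fun i _ => mul_nonneg (h.reinf_nonneg i ω) (h.draw_nonneg i ω))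
    (Finset.mem_univ j)

theorem gain_sq (h : UrnStep μ m N X A) (ω : Ω) :
    (∑ i, A i ω * X i ω) ^ 2 = ∑ i, A i ω ^ 2 * X i ω :=
  sq_sum_mul_eq_sum_sq_mul (fun i => h.draw_eq_zero_or_one i ω) (h.sum_draw ω) _

theorem integrable_mul_draw [IsFiniteMeasure μ] (h : UrnStep μ m N X A) {g : Ω → ℝ}
    (hg : Integrable g μ) (i : ι) : Integrable (fun ω => g ω * X i ω) μ :=
  hg.mul_bdd (h.measurable_draw i).aestronglyMeasurable (c := 1) <| ae_of_all _ fun ω => by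
    rw [Real.norm_eq_abs, abs_of_nonneg (h.draw_nonneg i ω)]; exact h.draw_le_one i ω

theorem integrable_gain [IsFiniteMeasure μ] (h : UrnStep μ m N X A) :
    Integrable (fun ω => ∑ i, A i ω * X i ω) μ :=
  integrable_finsetSum _ fun i _ =>
    h.integrable_mul_draw ((h.memLp_reinf i).integrable one_le_two) i

theorem integrable_gain_sq [IsFiniteMeasure μ] (h : UrnStep μ m N X A) :
    Integrable (fun ω => (∑ i, A i ω * X i ω) ^ 2) μ := by
  simp_rw [h.gain_sq]
  exact integrable_finsetSum _ fun i _ => h.integrable_mul_draw (h.memLp_reinf i).integrable_sq i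

theorem condExp_mul_draw [IsFiniteMeasure μ] (h : UrnStep μ m N X A) {g : Ω → ℝ}
    (hg : Measurable[MeasurableSpace.comap (fun ω i => A i ω) inferInstance] g)
    (hgi : Integrable g μ) (i : ι) :
    μ[fun ω => g ω * X i ω|m] =ᵐ[μ]
      fun ω => (∫ ω', g ω' ∂μ) * (N i ω / ∑ k, N k ω) := by
  have hA : MeasurableSpace.comap (fun ω i => A i ω) inferInstance ≤ m0 :=
    (measurable_pi_lambda _ h.measurable_reinf).comap_le
  have hX : MeasurableSpace.comap (fun ω i => X i ω) inferInstance ≤ m0 :=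
    (measurable_pi_lambda _ h.measurable_draw).comap_le
  have hXi : Measurable[MeasurableSpace.comap (fun ω i => X i ω) inferInstance] (X i) :=
    measurable_comap_pi_apply (fun ω i => X i ω) i
  have hfun : (fun ω => g ω * X i ω) = X i * g := funext fun ω => mul_comm _ _
  rw [hfun]
  filter_upwards [condExp_mul_of_indep h.le hX hA hXi.stronglyMeasurable hg.stronglyMeasurable
    (hfun ▸ h.integrable_mul_draw hgi i) hgi h.indep, h.condExp_draw i] with ω h₁ h₂
  rw [h₁, Pi.smul_apply, h₂, smul_eq_mul]

theorem condExp_sum_mul_draw [IsFiniteMeasure μ] (h : UrnStep μ m N X A) {g : ι → Ω → ℝ}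
    (hg : ∀ i, Measurable[MeasurableSpace.comap (fun ω i => A i ω) inferInstance] (g i))
    (hgi : ∀ i, Integrable (g i) μ) :
    μ[fun ω => ∑ i, g i ω * X i ω|m] =ᵐ[μ]
      fun ω => ∑ i, (∫ ω', g i ω' ∂μ) * (N i ω / ∑ k, N k ω) := by
  have hsum : (fun ω => ∑ i, g i ω * X i ω) = ∑ i, fun ω => g i ω * X i ω := by
    ext ω; simp only [Finset.sum_apply]
  rw [hsum]
  filter_upwards [condExp_finsetSum (fun i _ => h.integrable_mul_draw (hgi i) i) m,
    ae_all_iff.2 fun i => h.condExp_mul_draw (hg i) (hgi i) i] with ω h₁ h₂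
  rw [h₁, Finset.sum_apply]
  exact Finset.sum_congr rfl fun i _ => h₂ i

theorem condExp_gain [IsFiniteMeasure μ] (h : UrnStep μ m N X A) (j : ι) :
    μ[fun ω => ∑ i, A i ω * X i ω|m] =ᵐ[μ] fun _ => ∫ ω, A j ω ∂μ := by
  filter_upwards [h.condExp_sum_mul_draw (measurable_comap_pi_apply _)
    fun i => (h.memLp_reinf i).integrable one_le_two] with ω hω
  rw [hω]
  simp only [h.integral_reinf _ j, ← Finset.mul_sum, h.sum_comp_div_total, mul_one]

theorem condExp_gain_sq [IsFiniteMeasure μ] (h : UrnStep μ m N X A) :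
    μ[fun ω => (∑ i, A i ω * X i ω) ^ 2|m] =ᵐ[μ]
      fun ω => ∑ i, (∫ ω', A i ω' ^ 2 ∂μ) * (N i ω / ∑ k, N k ω) := by
  simp_rw [h.gain_sq]
  exact h.condExp_sum_mul_draw
    (fun i => (measurable_comap_pi_apply (fun ω i => A i ω) i).pow_const 2)
    fun i => (h.memLp_reinf i).integrable_sq

theorem measurable_total (h : UrnStep μ m N X A) : Measurable[m] fun ω => ∑ i, N i ω :=
  Finset.measurable_sum _ fun i _ => h.measurable_comp i

theorem exists_norm_inv_total_pow_le (h : UrnStep μ m N X A) (k : ℕ) :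
    ∃ C, ∀ ω, ‖((∑ i, N i ω) ^ k)⁻¹‖ ≤ C := by
  obtain ⟨s, hs, hle⟩ := h.exists_pos_le_total
  refine ⟨(s ^ k)⁻¹, fun ω => ?_⟩
  rw [norm_inv, norm_pow, Real.norm_of_nonneg (h.total_pos ω).le]
  exact inv_anti₀ (pow_pos hs k) (pow_le_pow_left₀ hs.le (hle ω) k)

theorem measurable_frac (h : UrnStep μ m N X A) (j : ι) :
    Measurable[m] fun ω => N j ω / ∑ i, N i ω :=
  (h.measurable_comp j).div h.measurable_total

theorem frac_nonneg (h : UrnStep μ m N X A) (j : ι) (ω : Ω) : 0 ≤ N j ω / ∑ i, N i ω :=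
  div_nonneg (h.comp_nonneg j ω) (h.total_pos ω).le

theorem frac_le_one (h : UrnStep μ m N X A) (j : ι) (ω : Ω) : N j ω / ∑ i, N i ω ≤ 1 :=
  (div_le_one (h.total_pos ω)).2 (h.comp_le_total j ω)

theorem norm_frac_le_one (h : UrnStep μ m N X A) (j : ι) (ω : Ω) :
    ‖N j ω / ∑ i, N i ω‖ ≤ 1 := by
  rw [Real.norm_of_nonneg (h.frac_nonneg j ω)]; exact h.frac_le_one j ω

theorem integrable_frac_mul_gain [IsFiniteMeasure μ] (h : UrnStep μ m N X A) (j : ι) :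
    Integrable (fun ω => N j ω / (∑ i, N i ω) * ∑ i, A i ω * X i ω) μ :=
  h.integrable_gain.bdd_mul ((h.measurable_frac j).mono h.le le_rfl).aestronglyMeasurable
    (ae_of_all _ (h.norm_frac_le_one j))

theorem integrable_centered_gain [IsFiniteMeasure μ] (h : UrnStep μ m N X A) (j : ι) :
    Integrable (fun ω => A j ω * X j ω - N j ω / (∑ i, N i ω) * ∑ i, A i ω * X i ω) μ :=
  (h.integrable_mul_draw ((h.memLp_reinf j).integrable one_le_two) j).sub
    (h.integrable_frac_mul_gain j)

theorem condExp_centered_gain [IsFiniteMeasure μ] (h : UrnStep μ m N X A) (j : ι) :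
    μ[fun ω => A j ω * X j ω - N j ω / (∑ i, N i ω) * ∑ i, A i ω * X i ω|m] =ᵐ[μ] 0 := by
  have hAj := (h.memLp_reinf j).integrable one_le_two
  have hsub : μ[fun ω => A j ω * X j ω - N j ω / (∑ i, N i ω) * ∑ i, A i ω * X i ω|m] =ᵐ[μ]
      μ[fun ω => A j ω * X j ω|m] - μ[fun ω => N j ω / (∑ i, N i ω) * ∑ i, A i ω * X i ω|m] :=
    condExp_sub (h.integrable_mul_draw hAj j) (h.integrable_frac_mul_gain j) m
  have hpull : μ[fun ω => N j ω / (∑ i, N i ω) * ∑ i, A i ω * X i ω|m] =ᵐ[μ]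
      fun ω => N j ω / (∑ i, N i ω) * μ[fun ω => ∑ i, A i ω * X i ω|m] ω :=
    condExp_stronglyMeasurable_mul_of_bound h.le (h.measurable_frac j).stronglyMeasurable
      h.integrable_gain 1 (ae_of_all _ (h.norm_frac_le_one j))
  filter_upwards [hsub, hpull, h.condExp_gain j,
    h.condExp_mul_draw (measurable_comap_pi_apply (fun ω i => A i ω) j) hAj j]
    with ω h₁ h₂ h₃ h₄
  rw [h₁, Pi.sub_apply, h₂, h₃, h₄, Pi.zero_apply]
  ring

theorem integrable_frac [IsFiniteMeasure μ] (h : UrnStep μ m N X A) (j : ι) :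
    Integrable (fun ω => N j ω / ∑ i, N i ω) μ :=
  .of_bound ((h.measurable_frac j).mono h.le le_rfl).aestronglyMeasurable 1
    (ae_of_all _ (h.norm_frac_le_one j))

theorem integrable_next_frac [IsFiniteMeasure μ] (h : UrnStep μ m N X A) (j : ι) :
    Integrable (fun ω => (N j ω + A j ω * X j ω) / (∑ i, N i ω + ∑ i, A i ω * X i ω)) μ := by
  have hmeas : Measurable fun ω => (N j ω + A j ω * X j ω) / (∑ i, N i ω + ∑ i, A i ω * X i ω) :=
    (((h.measurable_comp j).mono h.le le_rfl).add
      ((h.measurable_reinf j).mul (h.measurable_draw j))).div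
    ((h.measurable_total.mono h.le le_rfl).add
      (Finset.measurable_sum _ fun i _ => (h.measurable_reinf i).mul (h.measurable_draw i)))
  refine .of_bound hmeas.aestronglyMeasurable 1 (ae_of_all _ fun ω => ?_)
  have hU := mul_nonneg (h.reinf_nonneg j ω) (h.draw_nonneg j ω)
  rw [Real.norm_of_nonneg (div_nonneg (add_nonneg (h.comp_nonneg j ω) hU)
    (add_nonneg (h.total_pos ω).le (h.gain_nonneg ω)))]
  exact div_le_one_of_le₀ (add_le_add (h.comp_le_total j ω) (h.reinf_mul_draw_le_gain j ω))
    (add_nonneg (h.total_pos ω).le (h.gain_nonneg ω))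

theorem integrable_first_order [IsFiniteMeasure μ] (h : UrnStep μ m N X A) (j : ι) :
    Integrable (fun ω => (∑ i, N i ω)⁻¹ *
      (A j ω * X j ω - N j ω / (∑ i, N i ω) * ∑ i, A i ω * X i ω)) μ := by
  obtain ⟨C, hC⟩ := h.exists_norm_inv_total_pow_le 1
  simp only [pow_one] at hC
  exact (h.integrable_centered_gain j).bdd_mul
    (h.measurable_total.inv.mono h.le le_rfl).aestronglyMeasurable (ae_of_all _ hC)

theorem condExp_first_order [IsFiniteMeasure μ] (h : UrnStep μ m N X A) (j : ι) :
    μ[fun ω => (∑ i, N i ω)⁻¹ *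
      (A j ω * X j ω - N j ω / (∑ i, N i ω) * ∑ i, A i ω * X i ω)|m] =ᵐ[μ] 0 := by
  obtain ⟨C, hC⟩ := h.exists_norm_inv_total_pow_le 1
  simp only [pow_one] at hC
  have hpull : μ[fun ω => (∑ i, N i ω)⁻¹ *
      (A j ω * X j ω - N j ω / (∑ i, N i ω) * ∑ i, A i ω * X i ω)|m] =ᵐ[μ]
      fun ω => (∑ i, N i ω)⁻¹ *
        μ[fun ω => A j ω * X j ω - N j ω / (∑ i, N i ω) * ∑ i, A i ω * X i ω|m] ω :=
    condExp_stronglyMeasurable_mul_of_bound h.le h.measurable_total.inv.stronglyMeasurable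
      (h.integrable_centered_gain j) C (ae_of_all _ hC)
  filter_upwards [hpull, h.condExp_centered_gain j] with ω h₁ h₂
  rw [h₁, h₂, Pi.zero_apply, mul_zero]

theorem integrable_gain_sq_div [IsFiniteMeasure μ] (h : UrnStep μ m N X A) :
    Integrable (fun ω => ((∑ i, N i ω) ^ 2)⁻¹ * (∑ i, A i ω * X i ω) ^ 2) μ := by
  obtain ⟨C, hC⟩ := h.exists_norm_inv_total_pow_le 2
  exact h.integrable_gain_sq.bdd_mul
    ((h.measurable_total.pow_const 2).inv.mono h.le le_rfl).aestronglyMeasurable (ae_of_all _ hC)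

theorem ae_condExp_gain_sq_div_le [IsFiniteMeasure μ] (h : UrnStep μ m N X A) :
    ∀ᵐ ω ∂μ, μ[fun ω => ((∑ i, N i ω) ^ 2)⁻¹ * (∑ i, A i ω * X i ω) ^ 2|m] ω ≤
      (∑ i, ∫ ω', A i ω' ^ 2 ∂μ) / (∑ i, N i ω) ^ 2 := by
  obtain ⟨C, hC⟩ := h.exists_norm_inv_total_pow_le 2
  have hpull : μ[fun ω => ((∑ i, N i ω) ^ 2)⁻¹ * (∑ i, A i ω * X i ω) ^ 2|m] =ᵐ[μ]
      fun ω => ((∑ i, N i ω) ^ 2)⁻¹ * μ[fun ω => (∑ i, A i ω * X i ω) ^ 2|m] ω :=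
    condExp_stronglyMeasurable_mul_of_bound h.le
      (h.measurable_total.pow_const 2).inv.stronglyMeasurable h.integrable_gain_sq C
      (ae_of_all _ hC)
  filter_upwards [hpull, h.condExp_gain_sq] with ω h₁ h₂
  rw [h₁, h₂, inv_mul_eq_div]
  gcongr with i
  exact mul_le_of_le_one_right (integral_nonneg fun _ => sq_nonneg _) (h.frac_le_one i ω)

theorem abs_next_frac_sub_first_order_le (h : UrnStep μ m N X A) (j : ι) (ω : Ω) :
    |(N j ω + A j ω * X j ω) / (∑ i, N i ω + ∑ i, A i ω * X i ω) - N j ω / ∑ i, N i ω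
      - (∑ i, N i ω)⁻¹ * (A j ω * X j ω - N j ω / (∑ i, N i ω) * ∑ i, A i ω * X i ω)| ≤
      ((∑ i, N i ω) ^ 2)⁻¹ * (∑ i, A i ω * X i ω) ^ 2 := by
  rw [inv_mul_eq_div, inv_mul_eq_div]
  exact abs_div_add_sub_div_sub_le (h.total_pos ω) (h.gain_nonneg ω) (h.comp_nonneg j ω)
    (h.comp_le_total j ω) (mul_nonneg (h.reinf_nonneg j ω) (h.draw_nonneg j ω))
    (h.reinf_mul_draw_le_gain j ω)

theorem ae_abs_condExp_next_frac_sub_le [IsFiniteMeasure μ] (h : UrnStep μ m N X A) (j : ι) :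
    ∀ᵐ ω ∂μ, |μ[fun ω => (N j ω + A j ω * X j ω) / (∑ i, N i ω + ∑ i, A i ω * X i ω)|m] ω
      - N j ω / ∑ i, N i ω| ≤ (∑ i, ∫ ω', A i ω' ^ 2 ∂μ) / (∑ i, N i ω) ^ 2 := by
  set next := fun ω => (N j ω + A j ω * X j ω) / (∑ i, N i ω + ∑ i, A i ω * X i ω)
  set Z := fun ω => N j ω / ∑ i, N i ω
  set D := fun ω => (∑ i, N i ω)⁻¹ *
    (A j ω * X j ω - N j ω / (∑ i, N i ω) * ∑ i, A i ω * X i ω)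
  set R := fun ω => next ω - Z ω - D ω
  have hR_int : Integrable R μ :=
    ((h.integrable_next_frac j).sub (h.integrable_frac j)).sub (h.integrable_first_order j)
  have hnext : μ[next|m] =ᵐ[μ] Z + μ[R|m] := by
    have hsplit : next = Z + (D + R) := by ext ω; simp only [Pi.add_apply, R]; ring
    rw [hsplit]
    filter_upwards [condExp_add (h.integrable_frac j) ((h.integrable_first_order j).add hR_int) m,
      condExp_add (h.integrable_first_order j) hR_int m, h.condExp_first_order j]
      with ω h₁ h₂ h₃
    rw [h₁, Pi.add_apply, condExp_of_stronglyMeasurable h.le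
      (h.measurable_frac j).stronglyMeasurable (h.integrable_frac j), h₂, Pi.add_apply, h₃,
      Pi.zero_apply, zero_add, Pi.add_apply]
  have hR : μ[(|R|) | m] ≤ᵐ[μ]
      μ[fun ω => ((∑ i, N i ω) ^ 2)⁻¹ * (∑ i, A i ω * X i ω) ^ 2|m] :=
    condExp_mono hR_int.abs h.integrable_gain_sq_div
      (ae_of_all _ (h.abs_next_frac_sub_first_order_le j))
  filter_upwards [hnext, abs_condExp_ae_le_condExp_abs R, hR, h.ae_condExp_gain_sq_div_le]
    with ω h₁ h₂ h₃ h₄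
  rw [h₁, Pi.add_apply, add_sub_cancel_left]
  exact h₂.trans (h₃.trans h₄)

end UrnStep

end

section

variable {Ω ι : Type*}

def urnComposition (a : ι → ℝ) (X A : ℕ → ι → Ω → ℝ) (n : ℕ) (i : ι) (ω : Ω) : ℝ :=
  a i + ∑ k ∈ Finset.Icc 1 n, A k i ω * X k i ω

theorem urnComposition_succ (a : ι → ℝ) (X A : ℕ → ι → Ω → ℝ) (n : ℕ) (i : ι) (ω : Ω) :
    urnComposition a X A (n + 1) i ω =
      urnComposition a X A n i ω + A (n + 1) i ω * X (n + 1) i ω := by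
  rw [urnComposition, urnComposition, Finset.sum_Icc_succ_top (by omega), add_assoc]

theorem sum_urnComposition [Fintype ι] (a : ι → ℝ) (X A : ℕ → ι → Ω → ℝ) (n : ℕ) (ω : Ω) :
    ∑ i, urnComposition a X A n i ω =
      ∑ i, a i + ∑ k ∈ Finset.Icc 1 n, ∑ i, A k i ω * X k i ω := by
  rw [← Finset.sum_comm, ← Finset.sum_add_distrib]; rfl

theorem le_urnComposition {a : ι → ℝ} {X A : ℕ → ι → Ω → ℝ} (hX : ∀ k i ω, 0 ≤ X k i ω)
    (hA : ∀ k i ω, 0 ≤ A k i ω) (n : ℕ) (i : ι) (ω : Ω) : a i ≤ urnComposition a X A n i ω :=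
  le_add_of_nonneg_right (Finset.sum_nonneg fun k _ => mul_nonneg (hA k i ω) (hX k i ω))

theorem measurable_urnComposition {m : MeasurableSpace Ω} {a : ι → ℝ} {X A : ℕ → ι → Ω → ℝ}
    {n : ℕ} (h : ∀ k i, 1 ≤ k → k ≤ n → Measurable[m] (X k i) ∧ Measurable[m] (A k i))
    (i : ι) :
    Measurable[m] (urnComposition a X A n i) :=
  measurable_const.add <| Finset.measurable_sum _ fun k hk =>
    (h k i (Finset.mem_Icc.1 hk).1 (Finset.mem_Icc.1 hk).2).2.mul
      (h k i (Finset.mem_Icc.1 hk).1 (Finset.mem_Icc.1 hk).2).1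

end

theorem stmt18
    {Ω : Type*} {m0 : MeasurableSpace Ω} {μ : Measure Ω} [IsProbabilityMeasure μ]
    (𝒢 : ℕ → MeasurableSpace Ω) (h𝒢le : ∀ n, 𝒢 n ≤ m0)
    (d : ℕ) (hd : 2 ≤ d)
    (a : Fin d → ℝ) (ha : ∀ j, 0 < a j)
    (X A : ℕ → Fin d → Ω → ℝ)
    (hX01 : ∀ n j ω, X n j ω = 0 ∨ X n j ω = 1)
    (hXsum : ∀ n ω, ∑ j, X n j ω = 1)
    (hA0 : ∀ n j ω, 0 ≤ A n j ω)
    (hAL2 : ∀ n j, MemLp (A n j) 2 μ)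
    (hmeas : ∀ n k j, 1 ≤ k → k ≤ n →
      Measurable[𝒢 n] (X k j) ∧ Measurable[𝒢 n] (A k j))
    (hindep : ∀ n, Indep
      (MeasurableSpace.comap (fun ω => fun j => A (n + 1) j ω) inferInstance)
      (𝒢 n ⊔ MeasurableSpace.comap (fun ω => fun j => X (n + 1) j ω) inferInstance) μ)
    (hmean : ∀ n j, ∫ ω, A n j ω ∂μ = ∫ ω, A n ⟨0, by omega⟩ ω ∂μ)
    (S : ℕ → Ω → ℝ)
    (hS : ∀ n ω, S n ω =
      (∑ i, a i) + ∑ k ∈ Finset.Icc 1 n, ∑ i, A k i ω * X k i ω)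
    (Z : ℕ → Fin d → Ω → ℝ)
    (hZ : ∀ n j ω, Z n j ω =
      (a j + ∑ k ∈ Finset.Icc 1 n, A k j ω * X k j ω) / S n ω)
    (hZcond : ∀ n j, Z n j =ᵐ[μ] μ[X (n + 1) j|𝒢 n]) :
    ∀ n : ℕ, ∀ j : Fin d, ∀ᵐ ω ∂μ,
      |(μ[Z (n + 1) j|𝒢 n]) ω - Z n j ω| ≤
        (∑ i, ∫ ω', (A (n + 1) i ω') ^ 2 ∂μ) / (S n ω) ^ 2 := by
  intro n j
  have : Nonempty (Fin d) := ⟨⟨0, by omega⟩⟩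
  have hX0 (k i ω) : 0 ≤ X k i ω := (hX01 k i ω).elim (·.symm ▸ le_rfl) (·.symm ▸ zero_le_one)
  have hS_eq (n ω) : S n ω = ∑ i, urnComposition a X A n i ω :=
    (hS n ω).trans (sum_urnComposition a X A n ω).symm
  have hZ_eq (n i) : Z n i = fun ω => urnComposition a X A n i ω /
      ∑ k, urnComposition a X A n k ω := funext fun ω => by rw [hZ, hS_eq]; rfl
  have hstep : UrnStep μ (𝒢 n) (urnComposition a X A n) (X (n + 1)) (A (n + 1)) :=
    { le := h𝒢le n
      measurable_comp := measurable_urnComposition (hmeas n)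
      comp_nonneg := fun i ω => (ha i).le.trans (le_urnComposition hX0 hA0 n i ω)
      exists_pos_le_total := ⟨∑ i, a i, Finset.sum_pos (fun i _ => ha i) Finset.univ_nonempty,
        fun ω => Finset.sum_le_sum fun i _ => le_urnComposition hX0 hA0 n i ω⟩
      draw_eq_zero_or_one := hX01 (n + 1)
      sum_draw := hXsum (n + 1)
      measurable_draw := fun i =>
        (hmeas (n + 1) (n + 1) i le_add_self le_rfl).1.mono (h𝒢le _) le_rfl
      condExp_draw := fun i => hZ_eq n i ▸ (hZcond n i).symm
      reinf_nonneg := hA0 (n + 1)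
      measurable_reinf := fun i =>
        (hmeas (n + 1) (n + 1) i le_add_self le_rfl).2.mono (h𝒢le _) le_rfl
      memLp_reinf := hAL2 (n + 1)
      indep := hindep n
      integral_reinf := fun i k => (hmean _ i).trans (hmean _ k).symm }
  filter_upwards [hstep.ae_abs_condExp_next_frac_sub_le j] with ω hω
  simpa only [hZ_eq, hS_eq, urnComposition_succ, Finset.sum_add_distrib] using hω
end

section
/- For a real-valued martingale difference sequence (d_k) adapted to (G_k) with |d_k| ≤ c almost surely, the partial sums M_n = ∑_{k=1}^n d_k satisfy the tail bound P(M_n < −y) ≤ exp(−y^2/(2c^2 n)) for all y > 0; applied in the urn context with m_n > 2nl, this gives P(S_n < t) ≤ 2 exp(−(b + r + 2nl − t)^2/(2c^2 n)) for all n ≥ n_0 and t < b + r + nl, and hence E[S_n^{−p}] = O(n^{−p}) for every p > 0. -/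
/-!
On `[-c, c]` the convexity bound `exp (s x) ≤ cosh (s c) + (x / c) sinh (s c)` together with
`cosh y ≤ exp (y² / 2)` gives `E[exp (s d_k) | G_{k-1}] ≤ exp (s² c² / 2)` for a martingale
difference bounded by `c`. Iterating with the tower property bounds the moment generating
function of `M_n` by `exp (n s² c² / 2)`, and the Chernoff bound at `s = -y / (c² n)` is Azuma's
inequality.

In the urn, `X_k (B_k ∧ c - E[B_k ∧ c]) + (1 - X_k) (R_k ∧ c - E[R_k ∧ c])` is such a
martingale difference because `(B_k, R_k)` is independent of `G_{k-1} ∨ σ(X_k)`, and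
`S_n ≥ b + r + m_n + S_n^{(c)}`, so `S_n < t` forces `S_n^{(c)} < -(b + r + 2 n l - t)`.
Finally `E[S_n^{-p}] ≤ (n l)^{-p} + (b + r)^{-p} P(S_n < n l)`, and the exponentially small
probability is `O(n^{-p})`.
-/

open MeasureTheory Filter Real ProbabilityTheory Finset
open scoped Topology

lemma exp_mul_le_cosh_add_mul_sinh {c x : ℝ} (hc : 0 < c) (hx : |x| ≤ c) (s : ℝ) :
    exp (s * x) ≤ cosh (s * c) + x / c * sinh (s * c) := by
  obtain ⟨hx₁, hx₂⟩ := abs_le.1 hx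
  calc exp (s * x) = exp ((c - x) / (2 * c) * -(s * c) + (c + x) / (2 * c) * (s * c)) := by
        congr 1; field_simp; ring
    _ ≤ (c - x) / (2 * c) * exp (-(s * c)) + (c + x) / (2 * c) * exp (s * c) :=
        convexOn_exp.2 (Set.mem_univ _) (Set.mem_univ _) (div_nonneg (by linarith) (by linarith))
          (div_nonneg (by linarith) (by linarith)) (by field_simp; ring)
    _ = cosh (s * c) + x / c * sinh (s * c) := by
        rw [Real.cosh_eq, Real.sinh_eq]; field_simp; ring

lemma abs_sum_Icc_le {Ω : Type*} {d : ℕ → Ω → ℝ} {c : ℝ}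
    (hdc : ∀ k ω, |d k ω| ≤ c) (n : ℕ) (ω : Ω) : |∑ k ∈ Icc 1 n, d k ω| ≤ n * c :=
  (abs_sum_le_sum_abs _ _).trans <| by
    simpa using sum_le_card_nsmul (Icc 1 n) (fun k => |d k ω|) c fun k _ => hdc k ω

section Azuma

variable {Ω : Type*} {m m0 : MeasurableSpace Ω} {μ : Measure Ω}

lemma condExp_exp_mul_le_of_condExp_eq_zero [IsFiniteMeasure μ] (hm : m ≤ m0) {d : Ω → ℝ}
    {c : ℝ} (hc : 0 < c) (hd : AEStronglyMeasurable d μ) (hdc : ∀ ω, |d ω| ≤ c)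
    (h0 : μ[d|m] =ᵐ[μ] 0) (s : ℝ) :
    μ[fun ω => exp (s * d ω)|m] ≤ᵐ[μ] fun _ => exp (s ^ 2 * c ^ 2 / 2) := by
  set a := cosh (s * c)
  set k := sinh (s * c) / c
  have hd_int : Integrable d μ := .of_bound hd c (ae_of_all _ hdc)
  have hmajor : μ[fun ω => exp (s * d ω)|m] ≤ᵐ[μ] μ[(fun _ => a) + k • d|m] := by
    refine condExp_mono (integrable_exp_mul_of_mem_Icc hd.aemeasurable
      (ae_of_all _ fun ω => abs_le.1 (hdc ω))) ((integrable_const a).add (hd_int.smul k))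
      (ae_of_all _ fun ω => ?_)
    have := exp_mul_le_cosh_add_mul_sinh hc (hdc ω) s
    simp only [Pi.add_apply, Pi.smul_apply, smul_eq_mul]
    linarith [show d ω / c * sinh (s * c) = k * d ω by ring]
  have hmajor_eq : μ[(fun _ => a) + k • d|m] =ᵐ[μ] fun _ => a := by
    filter_upwards [condExp_add (integrable_const a) (hd_int.smul k) m, condExp_smul k d m, h0]
      with ω hadd hsmul hω
    simp [hadd, hsmul, hω, condExp_const hm]
  filter_upwards [hmajor, hmajor_eq] with ω h₁ h₂
  calc _ ≤ a := h₁.trans_eq h₂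
    _ ≤ exp ((s * c) ^ 2 / 2) := cosh_le_exp_half_sq _
    _ = _ := by ring_nf

lemma mgf_add_le_of_condExp_eq_zero [IsFiniteMeasure μ] (hm : m ≤ m0) {M d : Ω → ℝ}
    {C c : ℝ} (hc : 0 < c) (hM : StronglyMeasurable[m] M) (hMC : ∀ ω, |M ω| ≤ C)
    (hd : AEStronglyMeasurable d μ) (hdc : ∀ ω, |d ω| ≤ c) (h0 : μ[d|m] =ᵐ[μ] 0)
    (s : ℝ) :
    mgf (M + d) μ s ≤ mgf M μ s * exp (s ^ 2 * c ^ 2 / 2) := by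
  set f := fun ω => exp (s * M ω)
  set g := fun ω => exp (s * d ω)
  have hM' : AEStronglyMeasurable M μ := (hM.mono hm).aestronglyMeasurable
  have hf_int : Integrable f μ :=
    integrable_exp_mul_of_mem_Icc hM'.aemeasurable (ae_of_all _ fun ω => abs_le.1 (hMC ω))
  have hg_int : Integrable g μ :=
    integrable_exp_mul_of_mem_Icc hd.aemeasurable (ae_of_all _ fun ω => abs_le.1 (hdc ω))
  have hfg : (fun ω => exp (s * (M + d) ω)) = f * g := by
    ext ω; simp [f, g, mul_add, exp_add]
  have hfg_int : Integrable (f * g) μ := hfg ▸ integrable_exp_mul_of_mem_Icc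
    (hM'.add hd).aemeasurable (ae_of_all _ fun ω => abs_le.1
      ((abs_add_le (M ω) (d ω)).trans (add_le_add (hMC ω) (hdc ω))))
  have hf_nonneg : ∀ ω, 0 ≤ f ω := fun ω => (exp_pos _).le
  calc mgf (M + d) μ s = ∫ ω, (f * μ[g|m]) ω ∂μ := by
        rw [mgf, hfg, ← integral_condExp hm]
        exact integral_congr_ae (condExp_mul_of_stronglyMeasurable_left
          (continuous_exp.comp_stronglyMeasurable (hM.const_mul s)) hfg_int hg_int)
    _ ≤ ∫ ω, f ω * exp (s ^ 2 * c ^ 2 / 2) ∂μ := by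
        refine integral_mono_of_nonneg ?_ (hf_int.mul_const _) ?_
        · filter_upwards [condExp_nonneg (m := m) (ae_of_all μ fun ω => (exp_pos (s * d ω)).le)]
            with ω hω using mul_nonneg (hf_nonneg ω) hω
        · filter_upwards [condExp_exp_mul_le_of_condExp_eq_zero hm hc hd hdc h0 s]
            with ω hω using mul_le_mul_of_nonneg_left hω (hf_nonneg ω)
    _ = mgf M μ s * exp (s ^ 2 * c ^ 2 / 2) := integral_mul_const _ _

lemma mgf_sum_le_of_condExp_eq_zero [IsProbabilityMeasure μ] (𝒢 : ℕ → MeasurableSpace Ω)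
    (h𝒢mono : Monotone 𝒢) (h𝒢le : ∀ n, 𝒢 n ≤ m0) {c : ℝ} (hc : 0 < c)
    {d : ℕ → Ω → ℝ} (hdm : ∀ k, 1 ≤ k → Measurable[𝒢 k] (d k))
    (hd0 : ∀ k, μ[d (k + 1)|𝒢 k] =ᵐ[μ] 0) (hdc : ∀ k ω, |d k ω| ≤ c)
    (s : ℝ) (n : ℕ) :
    mgf (fun ω => ∑ k ∈ Icc 1 n, d k ω) μ s ≤ exp (n * (s ^ 2 * c ^ 2 / 2)) := by
  induction n with
  | zero => simp
  | succ n ih =>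
    have hsum : (fun ω => ∑ k ∈ Icc 1 (n + 1), d k ω)
        = (fun ω => ∑ k ∈ Icc 1 n, d k ω) + d (n + 1) := by
      ext ω; simp [sum_Icc_succ_top]
    have hM : Measurable[𝒢 n] (fun ω => ∑ k ∈ Icc 1 n, d k ω) :=
      Finset.measurable_sum _ fun k hk =>
        (hdm k (mem_Icc.1 hk).1).mono (h𝒢mono (mem_Icc.1 hk).2) le_rfl
    rw [hsum]
    calc _ ≤ mgf (fun ω => ∑ k ∈ Icc 1 n, d k ω) μ s * exp (s ^ 2 * c ^ 2 / 2) :=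
          mgf_add_le_of_condExp_eq_zero (h𝒢le n) hc hM.stronglyMeasurable (abs_sum_Icc_le hdc n)
            ((hdm (n + 1) n.succ_pos).mono (h𝒢le _) le_rfl).aestronglyMeasurable (hdc _)
            (hd0 n) s
      _ ≤ exp (n * (s ^ 2 * c ^ 2 / 2)) * exp (s ^ 2 * c ^ 2 / 2) := by gcongr
      _ = exp ((n + 1 : ℕ) * (s ^ 2 * c ^ 2 / 2)) := by rw [← exp_add]; push_cast; ring_nf

lemma measureReal_sum_lt_neg_le [IsProbabilityMeasure μ] (𝒢 : ℕ → MeasurableSpace Ω)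
    (h𝒢mono : Monotone 𝒢) (h𝒢le : ∀ n, 𝒢 n ≤ m0) {c : ℝ} (hc : 0 < c)
    {d : ℕ → Ω → ℝ} (hdm : ∀ k, 1 ≤ k → Measurable[𝒢 k] (d k))
    (hd0 : ∀ k, μ[d (k + 1)|𝒢 k] =ᵐ[μ] 0) (hdc : ∀ k ω, |d k ω| ≤ c)
    (n : ℕ) {y : ℝ} (hy : 0 ≤ y) :
    μ.real {ω | ∑ k ∈ Icc 1 n, d k ω < -y} ≤ exp (-y ^ 2 / (2 * c ^ 2 * n)) := by
  set t := -y / (c ^ 2 * n)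
  have ht : t ≤ 0 := div_nonpos_of_nonpos_of_nonneg (neg_nonpos.2 hy) (by positivity)
  have hM : Measurable (fun ω => ∑ k ∈ Icc 1 n, d k ω) :=
    Finset.measurable_sum _ fun k hk => (hdm k (mem_Icc.1 hk).1).mono (h𝒢le k) le_rfl
  calc μ.real {ω | ∑ k ∈ Icc 1 n, d k ω < -y}
      ≤ μ.real {ω | ∑ k ∈ Icc 1 n, d k ω ≤ -y} :=
        measureReal_mono (Set.ofPred_subset_ofPred.2 fun _ => le_of_lt)
    _ ≤ exp (-t * -y) * mgf (fun ω => ∑ k ∈ Icc 1 n, d k ω) μ t :=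
        measure_le_le_exp_mul_mgf _ ht (integrable_exp_mul_of_mem_Icc hM.aemeasurable
          (ae_of_all _ fun ω => abs_le.1 (abs_sum_Icc_le hdc n ω)))
    _ ≤ exp (-t * -y) * exp (n * (t ^ 2 * c ^ 2 / 2)) := by
        gcongr; exact mgf_sum_le_of_condExp_eq_zero 𝒢 h𝒢mono h𝒢le hc hdm hd0 hdc t n
    _ = exp (-y ^ 2 / (2 * c ^ 2 * n)) := by
        rw [← exp_add]
        rcases n.eq_zero_or_pos with rfl | hn
        · simp [t]
        · congr 1; simp only [t]; field_simp; ring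

lemma condExp_mul_add_one_sub_mul_eq_zero [IsFiniteMeasure μ] (hm : m ≤ m0) {χ f g : Ω → ℝ}
    (hχ : StronglyMeasurable[m] χ) (hχ01 : ∀ ω, χ ω = 0 ∨ χ ω = 1)
    (hf : Integrable f μ) (hg : Integrable g μ) (hf0 : μ[f|m] =ᵐ[μ] 0)
    (hg0 : μ[g|m] =ᵐ[μ] 0) :
    μ[χ * f + (1 - χ) * g|m] =ᵐ[μ] 0 := by
  have hχ1 : ∀ᵐ ω ∂μ, ‖χ ω‖ ≤ 1 :=
    ae_of_all _ fun ω => by rcases hχ01 ω with h | h <;> simp [h]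
  have hχ1' : ∀ᵐ ω ∂μ, ‖(1 - χ) ω‖ ≤ 1 :=
    ae_of_all _ fun ω => by rcases hχ01 ω with h | h <;> simp [h]
  have hχ' : StronglyMeasurable[m] (1 - χ) := stronglyMeasurable_const.sub hχ
  have hχf : Integrable (χ * f) μ := hf.bdd_mul (hχ.mono hm).aestronglyMeasurable hχ1
  have hχg : Integrable ((1 - χ) * g) μ := hg.bdd_mul (hχ'.mono hm).aestronglyMeasurable hχ1'
  filter_upwards [condExp_add hχf hχg m,
    condExp_stronglyMeasurable_mul_of_bound hm hχ hf 1 hχ1,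
    condExp_stronglyMeasurable_mul_of_bound hm hχ' hg 1 hχ1', hf0, hg0]
    with ω hadd hmulf hmulg hfω hgω
  simp [hadd, hmulf, hmulg, hfω, hgω]

end Azuma

section Urn

variable {Ω : Type*} {m m0 : MeasurableSpace Ω}

noncomputable def centeredTrunc (μ : Measure Ω) (c : ℝ) (Y : Ω → ℝ) (ω : Ω) : ℝ :=
  min (Y ω) c - ∫ ω', min (Y ω') c ∂μ

def urnDraw (X B R : ℕ → Ω → ℝ) (k : ℕ) (ω : Ω) : ℝ :=
  B k ω * X k ω + R k ω * (1 - X k ω)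

/-- The `k`-th increment of the paper's truncated martingale `S_n^{(c)}`. -/
noncomputable def urnIncrement (μ : Measure Ω) (c : ℝ) (X B R : ℕ → Ω → ℝ) (k : ℕ)
    (ω : Ω) : ℝ :=
  X k ω * centeredTrunc μ c (B k) ω + (1 - X k ω) * centeredTrunc μ c (R k) ω

variable {μ : Measure Ω} {c : ℝ} {X B R : ℕ → Ω → ℝ} {k : ℕ}

lemma urnDraw_nonneg (hX01 : ∀ ω, X k ω = 0 ∨ X k ω = 1) (hB0 : ∀ ω, 0 ≤ B k ω)
    (hR0 : ∀ ω, 0 ≤ R k ω) (ω : Ω) : 0 ≤ urnDraw X B R k ω := by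
  rcases hX01 ω with h | h <;> simp [urnDraw, h, hB0, hR0]

lemma measurable_urnDraw (hX : Measurable[m] (X k)) (hB : Measurable[m] (B k))
    (hR : Measurable[m] (R k)) : Measurable[m] (urnDraw X B R k) :=
  (hB.mul hX).add (hR.mul (measurable_const.sub hX))

lemma measurable_urnIncrement (hX : Measurable[m] (X k)) (hB : Measurable[m] (B k))
    (hR : Measurable[m] (R k)) : Measurable[m] (urnIncrement μ c X B R k) :=
  (hX.mul ((hB.min measurable_const).sub_const _)).add
    ((measurable_const.sub hX).mul ((hR.min measurable_const).sub_const _))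

lemma urnIncrement_add_min_le (hX01 : ∀ ω, X k ω = 0 ∨ X k ω = 1) (ω : Ω) :
    urnIncrement μ c X B R k ω + min (∫ ω, min (B k ω) c ∂μ) (∫ ω, min (R k ω) c ∂μ)
      ≤ urnDraw X B R k ω := by
  have := min_le_left (∫ ω, min (B k ω) c ∂μ) (∫ ω, min (R k ω) c ∂μ)
  have := min_le_right (∫ ω, min (B k ω) c ∂μ) (∫ ω, min (R k ω) c ∂μ)
  rcases hX01 ω with h | h <;> simp only [urnIncrement, centeredTrunc, urnDraw, h] <;>
    linarith [min_le_left (B k ω) c, min_le_left (R k ω) c]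

variable [IsProbabilityMeasure μ]

lemma abs_centeredTrunc_le (hc : 0 ≤ c) {Y : Ω → ℝ} (hY : ∀ ω, 0 ≤ Y ω) (ω : Ω) :
    |centeredTrunc μ c Y ω| ≤ c := by
  have hmin (ω : Ω) : 0 ≤ min (Y ω) c ∧ min (Y ω) c ≤ c :=
    ⟨le_min (hY ω) hc, min_le_right _ _⟩
  have hint : ∫ ω, min (Y ω) c ∂μ ≤ c :=
    calc ∫ ω, min (Y ω) c ∂μ ≤ ‖∫ ω, min (Y ω) c ∂μ‖ := le_abs_self _
      _ ≤ c * μ.real Set.univ := norm_integral_le_of_norm_le_const <| ae_of_all _ fun ω =>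
          abs_le.2 ⟨by linarith [hmin ω], (hmin ω).2⟩
      _ = c := by simp
  have := integral_nonneg (μ := μ) (f := fun ω => min (Y ω) c) fun ω => (hmin ω).1
  rw [centeredTrunc, abs_le]
  constructor <;> linarith [hmin ω]

lemma integral_centeredTrunc (Y : Ω → ℝ) : ∫ ω, centeredTrunc μ c Y ω ∂μ = 0 := by
  by_cases hY : Integrable (fun ω => min (Y ω) c) μ
  · simp [centeredTrunc, integral_sub hY (integrable_const _)]
  · simp [centeredTrunc, integral_undef hY]

lemma integrable_centeredTrunc (hc : 0 ≤ c) {Y : Ω → ℝ} (hY : Measurable Y)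
    (hY0 : ∀ ω, 0 ≤ Y ω) : Integrable (centeredTrunc μ c Y) μ :=
  .of_bound ((hY.min measurable_const).sub_const _).aestronglyMeasurable c
    (ae_of_all _ (abs_centeredTrunc_le hc hY0))

lemma abs_urnIncrement_le (hc : 0 ≤ c) (hX01 : ∀ ω, X k ω = 0 ∨ X k ω = 1)
    (hB0 : ∀ ω, 0 ≤ B k ω) (hR0 : ∀ ω, 0 ≤ R k ω) (ω : Ω) :
    |urnIncrement μ c X B R k ω| ≤ c := by
  rcases hX01 ω with h | h
  · simpa [urnIncrement, h] using abs_centeredTrunc_le hc hR0 ω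
  · simpa [urnIncrement, h] using abs_centeredTrunc_le hc hB0 ω

lemma condExp_urnIncrement_eq_zero (hm : m ≤ m0) (hc : 0 ≤ c)
    (hX01 : ∀ ω, X k ω = 0 ∨ X k ω = 1) (hB0 : ∀ ω, 0 ≤ B k ω)
    (hR0 : ∀ ω, 0 ≤ R k ω) (hX : Measurable (X k)) (hB : Measurable (B k))
    (hR : Measurable (R k))
    (hindep : Indep (MeasurableSpace.comap (fun ω => (B k ω, R k ω)) inferInstance)
      (m ⊔ MeasurableSpace.comap (X k) inferInstance) μ) :
    μ[urnIncrement μ c X B R k|m] =ᵐ[μ] 0 := by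
  set m' := m ⊔ MeasurableSpace.comap (X k) inferInstance
  have hm' : m' ≤ m0 := sup_le hm hX.comap_le
  have hpair : Measurable[MeasurableSpace.comap (fun ω => (B k ω, R k ω)) inferInstance]
      (fun ω => (B k ω, R k ω)) := Measurable.of_comap_le le_rfl
  -- both truncations are functions of `(B k, R k)`, hence independent of `m'`
  have hcentered (φ : ℝ × ℝ → ℝ) (hφ : Measurable φ) :
      μ[centeredTrunc μ c (fun ω => φ (B k ω, R k ω))|m'] =ᵐ[μ] 0 :=
    (condExp_indep_eq (hB.prodMk hR).comap_le hm'
      (((hφ.min measurable_const).sub_const _).comp hpair).stronglyMeasurable hindep).trans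
      (ae_of_all _ fun _ => integral_centeredTrunc _)
  have hm'0 : μ[urnIncrement μ c X B R k|m'] =ᵐ[μ] 0 :=
    condExp_mul_add_one_sub_mul_eq_zero hm'
      (Measurable.of_comap_le (le_sup_right : _ ≤ m')).stronglyMeasurable hX01
      (integrable_centeredTrunc hc hB hB0) (integrable_centeredTrunc hc hR hR0)
      (hcentered Prod.fst measurable_fst) (hcentered Prod.snd measurable_snd)
  calc μ[urnIncrement μ c X B R k|m] =ᵐ[μ] μ[μ[urnIncrement μ c X B R k|m']|m] :=
        (condExp_condExp_of_le le_sup_left hm').symm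
    _ =ᵐ[μ] μ[0|m] := condExp_congr_ae hm'0
    _ = 0 := condExp_zero

lemma measureReal_lt_le_of_urn (𝒢 : ℕ → MeasurableSpace Ω) (h𝒢mono : Monotone 𝒢)
    (h𝒢le : ∀ n, 𝒢 n ≤ m0) (hc : 0 < c) (hX01 : ∀ k ω, X k ω = 0 ∨ X k ω = 1)
    (hB0 : ∀ k ω, 0 ≤ B k ω) (hR0 : ∀ k ω, 0 ≤ R k ω)
    (hmeas : ∀ k, 1 ≤ k →
      Measurable[𝒢 k] (X k) ∧ Measurable[𝒢 k] (B k) ∧ Measurable[𝒢 k] (R k))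
    (hindep : ∀ k, Indep
      (MeasurableSpace.comap (fun ω => (B (k + 1) ω, R (k + 1) ω)) inferInstance)
      (𝒢 k ⊔ MeasurableSpace.comap (X (k + 1)) inferInstance) μ)
    {S : Ω → ℝ} {β : ℝ} (n : ℕ)
    (hS : ∀ ω, S ω = β + ∑ k ∈ Icc 1 n, urnDraw X B R k ω) {t y : ℝ} (hy : 0 ≤ y)
    (hty : t + y ≤
      β + ∑ k ∈ Icc 1 n, min (∫ ω, min (B k ω) c ∂μ) (∫ ω, min (R k ω) c ∂μ)) :
    μ.real {ω | S ω < t} ≤ exp (-y ^ 2 / (2 * c ^ 2 * n)) := by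
  have hmeas' (k : ℕ) :
      Measurable (X (k + 1)) ∧ Measurable (B (k + 1)) ∧ Measurable (R (k + 1)) :=
    let ⟨hX, hB, hR⟩ := hmeas (k + 1) k.succ_pos
    ⟨hX.mono (h𝒢le _) le_rfl, hB.mono (h𝒢le _) le_rfl, hR.mono (h𝒢le _) le_rfl⟩
  refine (measureReal_mono fun ω (hω : S ω < t) => ?_).trans <|
    measureReal_sum_lt_neg_le 𝒢 h𝒢mono h𝒢le hc (d := urnIncrement μ c X B R)
      (fun k hk => measurable_urnIncrement (hmeas k hk).1 (hmeas k hk).2.1 (hmeas k hk).2.2)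
      (fun k => condExp_urnIncrement_eq_zero (h𝒢le k) hc.le (hX01 _) (hB0 _) (hR0 _)
        (hmeas' k).1 (hmeas' k).2.1 (hmeas' k).2.2 (hindep k))
      (fun k => abs_urnIncrement_le hc.le (hX01 k) (hB0 k) (hR0 k)) n hy
  have hsum := sum_le_sum fun k (_ : k ∈ Icc 1 n) =>
    urnIncrement_add_min_le (μ := μ) (c := c) (B := B) (R := R) (hX01 k) ω
  rw [sum_add_distrib] at hsum
  rw [Set.mem_ofPred_eq]
  linarith [hS ω]

end Urn

lemma exp_neg_mul_le_rpow_neg {a x : ℝ} (ha : 0 < a) (hx : 1 ≤ x) (p : ℝ) :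
    exp (-(a * x)) ≤ (⌈p⌉₊).factorial / a ^ ⌈p⌉₊ * x ^ (-p) := by
  set K := ⌈p⌉₊
  have hx0 : 0 < x := one_pos.trans_le hx
  calc exp (-(a * x)) = (exp (a * x))⁻¹ := exp_neg _
    _ ≤ ((a * x) ^ K / K.factorial)⁻¹ :=
        inv_anti₀ (by positivity) (pow_div_factorial_le_exp (a * x) (by positivity) K)
    _ = K.factorial / a ^ K * x ^ (-(K : ℝ)) := by
        rw [rpow_neg hx0.le, rpow_natCast, mul_pow]; field_simp
    _ ≤ K.factorial / a ^ K * x ^ (-p) := by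
        gcongr
        exact Nat.le_ceil p

lemma exists_le_mul_rpow_neg {f : ℕ → ℝ} {C D p : ℝ} (hp : 0 ≤ p) (hD : 0 ≤ D)
    (n0 : ℕ) (hfC : ∀ n, n0 ≤ n → 1 ≤ n → f n ≤ C * (n : ℝ) ^ (-p))
    (hfD : ∀ n, f n ≤ D) :
    ∃ K, ∀ n : ℕ, 1 ≤ n → f n ≤ K * (n : ℝ) ^ (-p) := by
  refine ⟨max C (D * (n0 : ℝ) ^ p), fun n hn => ?_⟩
  have hn0 : (0 : ℝ) < n := by exact_mod_cast hn
  rcases le_or_gt n0 n with h | h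
  · exact (hfC n h hn).trans (by gcongr; apply le_max_left)
  · calc f n ≤ D * ((n : ℝ) ^ p * (n : ℝ) ^ (-p)) := by
          rw [← rpow_add hn0, add_neg_cancel, rpow_zero, mul_one]; exact hfD n
      _ ≤ D * (n0 : ℝ) ^ p * (n : ℝ) ^ (-p) := by
          rw [← mul_assoc]; gcongr
      _ ≤ max C (D * (n0 : ℝ) ^ p) * (n : ℝ) ^ (-p) := by gcongr; exact le_max_right _ _

section Moments

variable {Ω : Type*} {m0 : MeasurableSpace Ω} {μ : Measure Ω} [IsProbabilityMeasure μ]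

lemma integral_rpow_neg_le {Y : Ω → ℝ} {β p : ℝ} (hβ : 0 < β) (hp : 0 ≤ p)
    (hY : ∀ ω, β ≤ Y ω) : ∫ ω, Y ω ^ (-p) ∂μ ≤ β ^ (-p) := by
  calc ∫ ω, Y ω ^ (-p) ∂μ ≤ ∫ _, β ^ (-p) ∂μ :=
        integral_mono_of_nonneg (ae_of_all _ fun ω => rpow_nonneg (hβ.le.trans (hY ω)) _)
          (integrable_const _)
          (ae_of_all _ fun ω => rpow_le_rpow_of_nonpos hβ (hY ω) (neg_nonpos.2 hp))
    _ = β ^ (-p) := by simp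

lemma integral_rpow_neg_le_add {Y : Ω → ℝ} (hYm : Measurable Y) {β p t : ℝ} (hβ : 0 < β)
    (hp : 0 ≤ p) (hY : ∀ ω, β ≤ Y ω) (ht : 0 < t) :
    ∫ ω, Y ω ^ (-p) ∂μ ≤ t ^ (-p) + β ^ (-p) * μ.real {ω | Y ω < t} := by
  have hs : MeasurableSet {ω | Y ω < t} := measurableSet_lt hYm measurable_const
  calc ∫ ω, Y ω ^ (-p) ∂μ
      ≤ ∫ ω, t ^ (-p) + {ω | Y ω < t}.indicator (fun _ => β ^ (-p)) ω ∂μ := by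
        refine integral_mono_of_nonneg
          (ae_of_all _ fun ω => rpow_nonneg (hβ.le.trans (hY ω)) _)
          ((integrable_const _).add ((integrable_const _).indicator hs)) (ae_of_all _ fun ω => ?_)
        by_cases hω : Y ω < t
        · simpa [hω] using le_add_of_nonneg_of_le (rpow_nonneg ht.le _)
            (rpow_le_rpow_of_nonpos hβ (hY ω) (neg_nonpos.2 hp))
        · simpa [hω] using rpow_le_rpow_of_nonpos ht (not_lt.1 hω) (neg_nonpos.2 hp)
    _ = t ^ (-p) + β ^ (-p) * μ.real {ω | Y ω < t} := by
        rw [integral_add (integrable_const _) ((integrable_const _).indicator hs),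
          integral_indicator_const _ hs]
        simp [mul_comm]

lemma exists_integral_rpow_neg_le {S : ℕ → Ω → ℝ} (hSm : ∀ n, Measurable (S n))
    {β l a C : ℝ} (hβ : 0 < β) (hSβ : ∀ n ω, β ≤ S n ω) (hl : 0 < l) (ha : 0 < a)
    (hC : 0 ≤ C) (n0 : ℕ)
    (htail : ∀ n : ℕ, n0 ≤ n → μ.real {ω | S n ω < n * l} ≤ C * exp (-(a * n)))
    {p : ℝ} (hp : 0 ≤ p) :
    ∃ K, ∀ n : ℕ, 1 ≤ n → ∫ ω, S n ω ^ (-p) ∂μ ≤ K * (n : ℝ) ^ (-p) := by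
  set K := ⌈p⌉₊
  refine exists_le_mul_rpow_neg (C := l ^ (-p) + β ^ (-p) * C * (K.factorial / a ^ K))
    hp (rpow_nonneg hβ.le _) n0 (fun n hn h1 => ?_)
    (fun n => integral_rpow_neg_le hβ hp (hSβ n))
  have hn1 : (1 : ℝ) ≤ n := by exact_mod_cast h1
  calc ∫ ω, S n ω ^ (-p) ∂μ ≤ (n * l) ^ (-p) + β ^ (-p) * μ.real {ω | S n ω < n * l} :=
        integral_rpow_neg_le_add (hSm n) hβ hp (hSβ n) (by positivity)
    _ ≤ l ^ (-p) * n ^ (-p) + β ^ (-p) * (C * (K.factorial / a ^ K * n ^ (-p))) := by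
        rw [mul_rpow (by positivity) hl.le, mul_comm]
        gcongr
        exact (htail n hn).trans (by gcongr; exact exp_neg_mul_le_rpow_neg ha hn1 p)
    _ = (l ^ (-p) + β ^ (-p) * C * (K.factorial / a ^ K)) * n ^ (-p) := by ring

end Moments

lemma exp_neg_sq_div_le {β l c : ℝ} (hβ : 0 ≤ β) (hl : 0 ≤ l) (hc : 0 < c) (n : ℕ) :
    exp (-(β + n * l) ^ 2 / (2 * c ^ 2 * n)) ≤ exp (-(l ^ 2 / (2 * c ^ 2) * n)) := by
  rcases n.eq_zero_or_pos with rfl | hn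
  · simp
  rw [exp_le_exp, neg_div, neg_le_neg_iff]
  calc l ^ 2 / (2 * c ^ 2) * n = (n * l) ^ 2 / (2 * c ^ 2 * n) := by field_simp
    _ ≤ (β + n * l) ^ 2 / (2 * c ^ 2 * n) := by gcongr; linarith

theorem stmt19_general
    {Ω : Type*} {m0 : MeasurableSpace Ω} {μ : Measure Ω} [IsProbabilityMeasure μ]
    (𝒢 : ℕ → MeasurableSpace Ω) (h𝒢mono : Monotone 𝒢) (h𝒢le : ∀ n, 𝒢 n ≤ m0)
    (b r : ℝ) (hb : 0 < b) (hr : 0 < r)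
    (X B R : ℕ → Ω → ℝ)
    (hX01 : ∀ n ω, X n ω = 0 ∨ X n ω = 1)
    (hB0 : ∀ n ω, 0 ≤ B n ω) (hR0 : ∀ n ω, 0 ≤ R n ω)
    (hmeas : ∀ n k, 1 ≤ k → k ≤ n →
      Measurable[𝒢 n] (X k) ∧ Measurable[𝒢 n] (B k) ∧ Measurable[𝒢 n] (R k))
    (hindep : ∀ n, 1 ≤ n → Indep
      (MeasurableSpace.comap (fun ω => (B n ω, R n ω)) inferInstance)
      (𝒢 (n - 1) ⊔ MeasurableSpace.comap (X n) inferInstance) μ)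
    (m : ℝ) (hm0 : 0 < m)
    (c : ℝ) (hc : 0 < c) (n0 : ℕ)
    (hmn : ∀ n : ℕ, n0 ≤ n →
      (n : ℝ) * m / 2 <
        ∑ k ∈ Finset.Icc 1 n, min (∫ ω, min (B k ω) c ∂μ) (∫ ω, min (R k ω) c ∂μ))
    (l : ℝ) (hl : l = m / 4)
    (S : ℕ → Ω → ℝ)
    (hS : ∀ n ω, S n ω =
      b + r + ∑ k ∈ Finset.Icc 1 n, (B k ω * X k ω + R k ω * (1 - X k ω))) :
    (∀ dk : ℕ → Ω → ℝ, (∀ k, 1 ≤ k → Measurable[𝒢 k] (dk k)) →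
      (∀ k, (μ[dk (k + 1)|𝒢 k]) =ᵐ[μ] 0) →
      (∀ k ω, |dk k ω| ≤ c) →
      ∀ n : ℕ, ∀ y : ℝ, 0 < y →
        (μ {ω | ∑ k ∈ Finset.Icc 1 n, dk k ω < -y}).toReal ≤
          Real.exp (-y ^ 2 / (2 * c ^ 2 * n))) ∧
    (∀ n : ℕ, n0 ≤ n → ∀ t : ℝ, t < b + r + n * l →
      (μ {ω | S n ω < t}).toReal ≤
        2 * Real.exp (-(b + r + 2 * n * l - t) ^ 2 / (2 * c ^ 2 * n))) ∧
    (∀ p : ℝ, 0 < p → ∃ Kp : ℝ, ∀ n : ℕ, 1 ≤ n →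
      ∫ ω, (S n ω) ^ (-p) ∂μ ≤ Kp * (n : ℝ) ^ (-p)) := by
  subst hl
  have hbr : 0 < b + r := add_pos hb hr
  have hl : 0 < m / 4 := by positivity
  have hSm (n : ℕ) : Measurable (S n) := by
    rw [funext (hS n)]
    refine (measurable_const.add (Finset.measurable_sum _ fun k hk => ?_)).mono (h𝒢le n) le_rfl
    obtain ⟨hX, hB, hR⟩ := hmeas n k (mem_Icc.1 hk).1 (mem_Icc.1 hk).2
    exact measurable_urnDraw hX hB hR
  have hSb (n : ℕ) (ω : Ω) : b + r ≤ S n ω :=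
    (hS n ω).symm ▸ le_add_of_nonneg_right
      (sum_nonneg fun k _ => urnDraw_nonneg (hX01 k) (hB0 k) (hR0 k) ω)
  have tail (n : ℕ) (hn : n0 ≤ n) (t : ℝ) (ht : t < b + r + n * (m / 4)) :
      μ.real {ω | S n ω < t} ≤ exp (-(b + r + 2 * n * (m / 4) - t) ^ 2 / (2 * c ^ 2 * n)) := by
    have : 0 ≤ n * (m / 4) := by positivity
    exact measureReal_lt_le_of_urn 𝒢 h𝒢mono h𝒢le hc hX01 hB0 hR0
      (fun k hk => hmeas k k hk le_rfl) (fun k => hindep (k + 1) k.succ_pos) n (hS n)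
      (by linarith) (by linarith [hmn n hn])
  refine ⟨fun dk hdm hd0 hdc n y hy =>
      measureReal_sum_lt_neg_le 𝒢 h𝒢mono h𝒢le hc hdm hd0 hdc n hy.le,
    fun n hn t ht => (tail n hn t ht).trans (le_mul_of_one_le_left (exp_pos _).le one_le_two),
    fun p hp => exists_integral_rpow_neg_le hSm hbr hSb hl (a := (m / 4) ^ 2 / (2 * c ^ 2))
      (by positivity) zero_le_one n0 (fun n hn => ?_) hp.le⟩
  have h := tail n hn (n * (m / 4)) (by linarith)
  rw [show b + r + 2 * n * (m / 4) - n * (m / 4) = b + r + n * (m / 4) by ring] at h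
  simpa using h.trans (exp_neg_sq_div_le hbr.le hl.le hc n)

theorem stmt19
    {Ω : Type*} {m0 : MeasurableSpace Ω} {μ : Measure Ω} [IsProbabilityMeasure μ]
    (𝒢 : ℕ → MeasurableSpace Ω) (h𝒢mono : Monotone 𝒢) (h𝒢le : ∀ n, 𝒢 n ≤ m0)
    (b r : ℝ) (hb : 0 < b) (hr : 0 < r)
    (X B R : ℕ → Ω → ℝ)
    (hX01 : ∀ n ω, X n ω = 0 ∨ X n ω = 1)
    (hB0 : ∀ n ω, 0 ≤ B n ω) (hR0 : ∀ n ω, 0 ≤ R n ω)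
    (hmeas : ∀ n k, 1 ≤ k → k ≤ n →
      Measurable[𝒢 n] (X k) ∧ Measurable[𝒢 n] (B k) ∧ Measurable[𝒢 n] (R k))
    (hBmeas : ∀ n, Measurable (B n)) (hRmeas : ∀ n, Measurable (R n))
    (hindep : ∀ n, 1 ≤ n → Indep
      (MeasurableSpace.comap (fun ω => (B n ω, R n ω)) inferInstance)
      (𝒢 (n - 1) ⊔ MeasurableSpace.comap (X n) inferInstance) μ)
    (m : ℝ) (hm0 : 0 < m)
    (hmean : ∀ n, ∫ ω, B n ω ∂μ = ∫ ω, R n ω ∂μ)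
    (hmlim : Tendsto (fun n : ℕ => ∫ ω, B n ω ∂μ) atTop (𝓝 m))
    (hL2bdd : ∃ K : ℝ, ∀ n, ∫ ω, (B n ω) ^ 2 ∂μ + ∫ ω, (R n ω) ^ 2 ∂μ ≤ K)
    (c : ℝ) (hc : 0 < c) (n0 : ℕ)
    (hmn : ∀ n : ℕ, n0 ≤ n →
      (n : ℝ) * m / 2 <
        ∑ k ∈ Finset.Icc 1 n, min (∫ ω, min (B k ω) c ∂μ) (∫ ω, min (R k ω) c ∂μ))
    (l : ℝ) (hl : l = m / 4)
    (S : ℕ → Ω → ℝ)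
    (hS : ∀ n ω, S n ω =
      b + r + ∑ k ∈ Finset.Icc 1 n, (B k ω * X k ω + R k ω * (1 - X k ω))) :
    (∀ dk : ℕ → Ω → ℝ, (∀ k, 1 ≤ k → Measurable[𝒢 k] (dk k)) →
      (∀ k, (μ[dk (k + 1)|𝒢 k]) =ᵐ[μ] 0) →
      (∀ k ω, |dk k ω| ≤ c) →
      ∀ n : ℕ, ∀ y : ℝ, 0 < y →
        (μ {ω | ∑ k ∈ Finset.Icc 1 n, dk k ω < -y}).toReal ≤
          Real.exp (-y ^ 2 / (2 * c ^ 2 * n))) ∧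
    (∀ n : ℕ, n0 ≤ n → ∀ t : ℝ, t < b + r + n * l →
      (μ {ω | S n ω < t}).toReal ≤
        2 * Real.exp (-(b + r + 2 * n * l - t) ^ 2 / (2 * c ^ 2 * n))) ∧
    (∀ p : ℝ, 0 < p → ∃ Kp : ℝ, ∀ n : ℕ, 1 ≤ n →
      ∫ ω, (S n ω) ^ (-p) ∂μ ≤ Kp * (n : ℝ) ^ (-p)) :=
  stmt19_general 𝒢 h𝒢mono h𝒢le b r hb hr X B R hX01 hB0 hR0 hmeas hindep m hm0 c hc n0 hmn l hl S hS
end
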